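/- arXiv:1711.08555 — 3 statements merged into one kernel-verified Lean document; each statement's English description precedes it below -/
import Mathlib

section
/- Let m ≥ 2 and let k, r be integers with 1 ≤ k and r ≥ 2k. Then the number of paths of length t = 2k in the perfect rooted m-ary tree of depth r equals m^(2k−1) · ( (1/2)(m+1) · (m^(r−k+1) − 1)/(m−1) − k ). -/
open SimpleGraph Finset

/-- `IsPerfectRootedMary m r H ρ` says that `H` is the perfect rooted `m`-ary tree of
depth `r` with root `ρ`: a tree whose root `ρ` has degree `m`, in which every other
vertex has degree `1` or `m + 1`, whose maximum distance from `ρ` to a vertex is `r`,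
and in which every degree-`1` vertex is at distance exactly `r` from `ρ`.
(For `r = 0` the root-degree condition is dropped, so that the one-vertex tree is the
perfect rooted tree of depth `0`.) -/
def IsPerfectRootedMary (m r : ℕ) {W : Type} [Fintype W] (H : SimpleGraph W)
    [DecidableRel H.Adj] (ρ : W) : Prop :=
  H.IsTree ∧
    (0 < r → H.degree ρ = m) ∧
    (∀ v : W, v ≠ ρ → H.degree v = 1 ∨ H.degree v = m + 1) ∧
    (∀ v : W, H.dist ρ v ≤ r) ∧
    (∃ v : W, H.dist ρ v = r) ∧
    (∀ v : W, H.degree v = 1 → H.dist ρ v = r)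

/-- The number of paths of length `t` in `H`, i.e. the number of unordered pairs of
vertices at distance exactly `t` from each other. -/
noncomputable def pathCount {W : Type} [Fintype W] [DecidableEq W] (H : SimpleGraph W) (t : ℕ) : ℕ :=
  (Finset.univ.filter fun p : Sym2 W => ∃ u v : W, p = s(u, v) ∧ H.dist u v = t).card

/-!
Measure depth by `dist ρ`. In a tree any two vertices `u`, `v` have a median with `ρ`: a vertex
`w` lying on shortest paths between each two of `ρ`, `u`, `v`, namely their deepest common
ancestor. It is unique, because a shortest path from `ρ` to `u` has only one vertex at each depth.
Hence the ordered pairs at distance `t` are partitioned by their median `w` and the length `a` of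
the leg from `w` to `u`. In the perfect `m`-ary tree of depth `r`, a vertex at depth `d` has
`m ^ a` descendants `a` levels down when `d + a ≤ r`, and `m ^ t - m ^ (t - 1)` of the pairs
with two nonzero legs leave `w` through different children. Summing over the `m ^ d` vertices
of each depth `d` yields geometric sums; for `t = 2 * k ≤ r` they add up to twice the claimed
number, each path being counted as two ordered pairs.
-/

namespace SimpleGraph

variable {V : Type*} {G : SimpleGraph V}

lemma Reachable.exists_adj_dist_add_one_eq {u v : V} (huv : G.Reachable u v) (hne : u ≠ v) :
    ∃ y, G.Adj u y ∧ G.dist y v + 1 = G.dist u v := by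
  obtain ⟨p, hp, hlen⟩ := huv.exists_path_of_dist
  have hnil : ¬p.Nil := Walk.not_nil_of_ne hne
  refine ⟨p.getVert 1, p.adj_snd hnil, le_antisymm ?_ ?_⟩
  · rw [← hlen, ← p.length_tail_add_one hnil]
    exact Nat.add_le_add_right (dist_le p.tail) 1
  · have := (p.adj_snd hnil).reachable.dist_triangle_left v
    rwa [dist_eq_one_iff_adj.mpr (p.adj_snd hnil), add_comm] at this

lemma Connected.exists_dist_eq_of_le (hG : G.Connected) {x y : V} {j : ℕ}
    (hj : j ≤ G.dist x y) : ∃ w, G.dist x w = j ∧ j + G.dist w y = G.dist x y := by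
  induction j with
  | zero => exact ⟨x, dist_self, by simp⟩
  | succ j ih =>
    obtain ⟨w, hxw, hwy⟩ := ih (by omega)
    have hne : w ≠ y := by rintro rfl; simp at hwy; omega
    obtain ⟨w', hadj, hw'y⟩ := (hG w y).exists_adj_dist_add_one_eq hne
    have h1 : G.dist x w' ≤ G.dist x w + G.dist w w' := hG.dist_triangle
    have h2 : G.dist x y ≤ G.dist x w' + G.dist w' y := hG.dist_triangle
    rw [dist_eq_one_iff_adj.mpr hadj] at h1
    exact ⟨w', by omega, by omega⟩

theorem IsTree.eq_of_dist_add_dist_eq (hG : G.IsTree) {x y w w' : V}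
    (hw : G.dist x w + G.dist w y = G.dist x y) (hw' : G.dist x w' + G.dist w' y = G.dist x y)
    (hd : G.dist x w = G.dist x w') : w = w' := by
  have geodesic_vert : ∀ z, G.dist x z + G.dist z y = G.dist x y →
      ∃ p : G.Walk x y, p.IsPath ∧ p.getVert (G.dist x z) = z := by
    intro z hz
    obtain ⟨p, -, hp⟩ := (hG.connected x z).exists_path_of_dist
    obtain ⟨q, -, hq⟩ := (hG.connected z y).exists_path_of_dist
    refine ⟨p.append q, (p.append q).isPath_of_length_eq_dist (by simp [hp, hq, hz]), ?_⟩
    simp [Walk.getVert_append, hp]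
  obtain ⟨p, hp, hpw⟩ := geodesic_vert w hw
  obtain ⟨p', hp', hpw'⟩ := geodesic_vert w' hw'
  rw [← hpw, ← hpw', hd, (hG.existsUnique_path x y).unique hp hp']

theorem IsTree.dist_parent_add_one (hG : G.IsTree) {ρ u v p : V} (hne : u ≠ v)
    (hdepth : G.dist ρ u ≤ G.dist ρ v) (hpv : G.Adj p v) (hp : G.dist ρ p + 1 = G.dist ρ v) :
    G.dist u p + 1 = G.dist u v := by
  induction hn : G.dist u v using Nat.strong_induction_on generalizing u v p with
  | _ n ih =>
  subst hn
  have hpv1 : G.dist p v = 1 := dist_eq_one_iff_adj.mpr hpv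
  have hupper : G.dist u v ≤ G.dist u p + 1 := hpv1 ▸ hG.connected.dist_triangle
  obtain ⟨y, huy, hyv⟩ := (hG.connected u v).exists_adj_dist_add_one_eq hne
  have huy1 : G.dist u y = 1 := dist_eq_one_iff_adj.mpr huy
  have hdepth_y := hG.dist_eq_dist_add_one_of_adj ρ huy
  by_cases hyv' : y = v
  · subst hyv'
    have hup : u = p := hG.eq_of_dist_add_dist_eq (x := ρ) (y := y)
      (by rw [huy1]; omega) (by omega) (by omega)
    subst hup
    simp [huy1]
  by_cases hy : G.dist ρ y ≤ G.dist ρ v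
  · have := ih _ (by omega) hyv' hy hpv hp rfl
    have : G.dist u p ≤ G.dist u y + G.dist y p := hG.connected.dist_triangle
    omega
  -- otherwise `u` is the parent of `y`, and the induction hypothesis for `(v, y)` contradicts
  -- `dist y v < dist u v`
  · have := ih (G.dist v y) (by rw [dist_comm]; omega) (u := v) (v := y) (p := u) (Ne.symm hyv')
      (by omega) huy (by omega) rfl
    rw [dist_comm, dist_comm (u := v)] at this
    omega

theorem IsTree.exists_median (hG : G.IsTree) (ρ u v : V) :
    ∃ w, G.dist ρ w + G.dist w u = G.dist ρ u ∧ G.dist ρ w + G.dist w v = G.dist ρ v ∧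
      G.dist w u + G.dist w v = G.dist u v := by
  induction hn : G.dist ρ u + G.dist ρ v using Nat.strong_induction_on generalizing u v with
  | _ n ih =>
  wlog huv : G.dist ρ u ≤ G.dist ρ v generalizing u v
  · obtain ⟨w, hwv, hwu, hw⟩ := this v u (by omega) (by omega)
    exact ⟨w, hwu, hwv, by rw [dist_comm (u := u)]; omega⟩
  by_cases hne : u = v
  · subst hne
    exact ⟨u, by simp, by simp, by simp⟩
  have hvρ : v ≠ ρ := by
    rintro rfl
    rw [dist_self, Nat.le_zero, hG.connected.dist_eq_zero_iff] at huv
    exact hne huv.symm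
  -- the median of `u` and the parent `p` of `v` is also a median of `u` and `v`
  obtain ⟨p, hvp, hp⟩ := (hG.connected v ρ).exists_adj_dist_add_one_eq hvρ
  rw [dist_comm, dist_comm (u := v)] at hp
  have hup := hG.dist_parent_add_one hne huv hvp.symm hp
  obtain ⟨w, hwu, hwp, hw⟩ := ih _ (by omega) u p rfl
  have h1 : G.dist w v ≤ G.dist w p + G.dist p v := hG.connected.dist_triangle
  have h2 : G.dist ρ v ≤ G.dist ρ w + G.dist w v := hG.connected.dist_triangle
  have h3 : G.dist u v ≤ G.dist u w + G.dist w v := hG.connected.dist_triangle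
  rw [dist_eq_one_iff_adj.mpr hvp.symm] at h1
  rw [dist_comm (u := u)] at h3
  exact ⟨w, hwu, by omega, by omega⟩

section Descendants

variable [Fintype V]

/-- In a tree rooted at `ρ`, the descendants of `w` exactly `a` levels below it. -/
noncomputable def descendants (G : SimpleGraph V) (ρ w : V) (a : ℕ) : Finset V :=
  {v | G.dist w v = a ∧ G.dist ρ w + a = G.dist ρ v}

@[simp]
lemma mem_descendants {ρ w v : V} {a : ℕ} :
    v ∈ G.descendants ρ w a ↔ G.dist w v = a ∧ G.dist ρ w + a = G.dist ρ v := by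
  simp [descendants]

lemma Connected.descendants_zero (hG : G.Connected) (ρ w : V) : G.descendants ρ w 0 = {w} := by
  ext v
  simp only [mem_descendants, add_zero, mem_singleton, hG.dist_eq_zero_iff]
  exact ⟨fun h => h.1.symm, fun h => ⟨h.symm, by rw [h]⟩⟩

lemma descendants_root (ρ : V) (d : ℕ) :
    G.descendants ρ ρ d = ({v | G.dist ρ v = d} : Finset V) := by
  ext v
  simp [eq_comm]

lemma IsTree.disjoint_descendants (hG : G.IsTree) {ρ w w' : V} (hne : w ≠ w')
    (hd : G.dist ρ w = G.dist ρ w') (a b : ℕ) :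
    Disjoint (G.descendants ρ w a) (G.descendants ρ w' b) := by
  refine Finset.disjoint_left.mpr fun v hv hv' => hne ?_
  rw [mem_descendants] at hv hv'
  exact hG.eq_of_dist_add_dist_eq (y := v) (by omega) (by omega) hd

lemma Connected.descendants_succ [DecidableEq V] (hG : G.Connected) (ρ w : V) (a : ℕ) :
    G.descendants ρ w (a + 1) = (G.descendants ρ w a).biUnion (G.descendants ρ · 1) := by
  ext v
  simp only [mem_descendants, mem_biUnion]
  constructor
  · rintro ⟨hwv, hv⟩
    obtain ⟨u, hvu, hu⟩ := (hG v w).exists_adj_dist_add_one_eq (by rintro rfl; simp at hwv)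
    have h1 : G.dist ρ v ≤ G.dist ρ u + G.dist u v := hG.dist_triangle
    have h2 : G.dist ρ u ≤ G.dist ρ w + G.dist w u := hG.dist_triangle
    rw [dist_eq_one_iff_adj.mpr hvu.symm] at h1
    rw [dist_comm (u := v), dist_comm (u := u)] at hu
    exact ⟨u, ⟨by omega, by omega⟩, dist_eq_one_iff_adj.mpr hvu.symm, by omega⟩
  · rintro ⟨u, ⟨hwu, hu⟩, huv, hv⟩
    have h1 : G.dist w v ≤ G.dist w u + G.dist u v := hG.dist_triangle
    have h2 : G.dist ρ v ≤ G.dist ρ w + G.dist w v := hG.dist_triangle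
    exact ⟨by omega, by omega⟩

/-- The pairs whose median with `ρ` is `w`, with legs of lengths `a` and `b` below it. -/
noncomputable def meetPairs (G : SimpleGraph V) (ρ w : V) (a b : ℕ) : Finset (V × V) :=
  {q ∈ G.descendants ρ w a ×ˢ G.descendants ρ w b | G.dist q.1 q.2 = a + b}

lemma Connected.meetPairs_zero_left (hG : G.Connected) (ρ w : V) (b : ℕ) :
    G.meetPairs ρ w 0 b = {w} ×ˢ G.descendants ρ w b := by
  rw [meetPairs, hG.descendants_zero, filter_true_of_mem]
  rintro ⟨u, v⟩ huv
  simp only [mem_product, mem_singleton, mem_descendants] at huv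
  rw [huv.1, huv.2.1, zero_add]

lemma Connected.meetPairs_zero_right (hG : G.Connected) (ρ w : V) (a : ℕ) :
    G.meetPairs ρ w a 0 = G.descendants ρ w a ×ˢ {w} := by
  rw [meetPairs, hG.descendants_zero, filter_true_of_mem]
  rintro ⟨u, v⟩ huv
  simp only [mem_product, mem_singleton, mem_descendants] at huv
  rw [huv.2, dist_comm, huv.1.1, add_zero]

lemma IsTree.pairwiseDisjoint_meetPairs (hG : G.IsTree) (ρ : V) (t : ℕ) :
    ((univ ×ˢ range (t + 1) : Finset (V × ℕ)) : Set (V × ℕ)).PairwiseDisjoint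
      fun x => G.meetPairs ρ x.1 x.2 (t - x.2) := by
  rintro ⟨w, a⟩ hwa ⟨w', a'⟩ hwa' hne
  refine Finset.disjoint_left.mpr fun q hq hq' => hne ?_
  simp only [coe_product, coe_univ, coe_range, Set.mem_prod, Set.mem_univ, Set.mem_Iio,
    true_and] at hwa hwa'
  simp only [meetPairs, mem_filter, mem_product, mem_descendants] at hq hq'
  have hw : w = w' :=
    hG.eq_of_dist_add_dist_eq (x := ρ) (y := q.1) (by omega) (by omega) (by omega)
  subst hw
  simp only [Prod.mk.injEq, true_and]
  omega

variable [DecidableEq V]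

lemma IsTree.filter_dist_eq_eq_biUnion_meetPairs (hG : G.IsTree) (ρ : V) (t : ℕ) :
    ({q : V × V | G.dist q.1 q.2 = t} : Finset (V × V)) =
      (univ ×ˢ range (t + 1)).biUnion fun x => G.meetPairs ρ x.1 x.2 (t - x.2) := by
  ext ⟨u, v⟩
  simp only [mem_filter, mem_univ, true_and, mem_biUnion, mem_product, mem_range,
    Prod.exists, meetPairs, mem_descendants]
  constructor
  · intro huv
    obtain ⟨w, hwu, hwv, hw⟩ := hG.exists_median ρ u v
    exact ⟨w, G.dist w u, by omega, ⟨⟨rfl, hwu⟩, by omega, by omega⟩, by omega⟩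
  · rintro ⟨w, a, ha, -, huv⟩
    omega

lemma IsTree.filter_dist_ne_eq_biUnion (hG : G.IsTree) {ρ w : V} {a b : ℕ} (ha : 0 < a)
    (hb : 0 < b) :
    {q ∈ G.descendants ρ w a ×ˢ G.descendants ρ w b | G.dist q.1 q.2 ≠ a + b} =
      (G.descendants ρ w 1).biUnion
        fun c => G.descendants ρ c (a - 1) ×ˢ G.descendants ρ c (b - 1) := by
  have tri := fun x y z : V => hG.connected.dist_triangle (u := x) (v := y) (w := z)
  ext ⟨u, v⟩
  simp only [mem_filter, mem_product, mem_descendants, mem_biUnion]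
  constructor
  -- the median `w'` of `u` and `v` lies below `w`; take for `c` its ancestor one level below `w`
  · rintro ⟨⟨⟨hwu, hu⟩, hwv, hv⟩, huv⟩
    obtain ⟨w', hw'u, hw'v, hw'⟩ := hG.exists_median ρ u v
    have := tri u w v
    rw [dist_comm (u := u) (v := w)] at this
    obtain ⟨c, hc, hcw'⟩ := hG.connected.exists_dist_eq_of_le (x := ρ) (y := w')
      (j := G.dist ρ w + 1) (by omega)
    have hcu := tri c w' u
    have hcv := tri c w' v
    obtain ⟨z, hz, hzc⟩ := hG.connected.exists_dist_eq_of_le (x := ρ) (y := c)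
      (j := G.dist ρ w) (by omega)
    have hzu := tri z c u
    have hzw : z = w := hG.eq_of_dist_add_dist_eq (x := ρ) (y := u)
      (by have := tri ρ z u; omega) (by omega) (by omega)
    subst hzw
    have := tri ρ c u
    have := tri ρ c v
    exact ⟨c, ⟨by omega, by omega⟩, ⟨by omega, by omega⟩, by omega, by omega⟩
  · rintro ⟨c, ⟨hwc, hc⟩, ⟨hcu, hu⟩, hcv, hv⟩
    have := tri w c u
    have := tri w c v
    have := tri ρ w u
    have := tri ρ w v
    have := tri u c v
    rw [dist_comm (u := u) (v := c)] at this
    exact ⟨⟨⟨by omega, by omega⟩, by omega, by omega⟩, by omega⟩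

end Descendants

end SimpleGraph

lemma two_mul_pathCount {V : Type} [Fintype V] [DecidableEq V] (G : SimpleGraph V) {t : ℕ}
    (ht : t ≠ 0) : 2 * pathCount G t = #{q : V × V | G.dist q.1 q.2 = t} := by
  classical
  let H := SimpleGraph.fromRel fun u v : V => G.dist u v = t
  have hadj : ∀ u v, H.Adj u v ↔ G.dist u v = t := fun u v => by
    simp only [H, fromRel_adj, dist_comm (u := v), or_self, and_iff_right_iff_imp]
    rintro huv rfl
    exact ht (by simpa using huv.symm)
  have hedges : pathCount G t = #H.edgeFinset := by
    unfold pathCount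
    congr 1
    ext e
    induction e using Sym2.ind with
    | _ u v =>
      simp only [mem_filter, mem_univ, true_and, mem_edgeFinset, mem_edgeSet, hadj]
      refine ⟨?_, fun h => ⟨u, v, rfl, h⟩⟩
      rintro ⟨u', v', huv, h⟩
      rcases Sym2.eq_iff.mp huv with ⟨rfl, rfl⟩ | ⟨rfl, rfl⟩
      · exact h
      · rwa [dist_comm]
  rw [hedges, two_mul_card_edgeFinset]
  simp only [hadj]

lemma Finset.sum_range_two_mul_add_one_min {M : Type*} [AddCommMonoid M] (f : ℕ → M) (k : ℕ) :
    ∑ a ∈ range (2 * k + 1), f (min a (2 * k - a)) = 2 • ∑ a ∈ range k, f a + f k := by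
  rw [show 2 * k + 1 = k + (k + 1) by ring, sum_range_add, two_nsmul, add_assoc,
    ← sum_range_succ, ← sum_range_reflect f (k + 1)]
  congr 1
  · exact sum_congr rfl fun a ha => by rw [mem_range] at ha; congr 1; omega
  · exact sum_congr rfl fun a ha => by rw [mem_range] at ha; congr 1; omega

lemma sum_range_mul_geom_sum_eq {K : Type*} [Field K] {x : K} (hx : x ≠ 1) {k r : ℕ}
    (hk : 1 ≤ k) (hr : 2 * k ≤ r) :
    ∑ a ∈ range (2 * k + 1), (x ^ (2 * k) - if a = 0 ∨ a = 2 * k then 0 else x ^ (2 * k - 1)) *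
        ∑ d ∈ range (r + 1 - max a (2 * k - a)), x ^ d =
      x ^ (2 * k - 1) * ((x + 1) * ((x ^ (r - k + 1) - 1) / (x - 1)) - 2 * k) := by
  obtain ⟨j, rfl⟩ : ∃ j, k = j + 1 := ⟨k - 1, by omega⟩
  obtain ⟨s, rfl⟩ : ∃ s, r = 2 * (j + 1) + s := ⟨r - 2 * (j + 1), by omega⟩
  have hx1 : x - 1 ≠ 0 := sub_ne_zero.mpr hx
  -- the summand depends on `a` only through `min a (2 * k - a)`, so the sum folds in half
  let F : ℕ → K := fun i => (x ^ (2 * (j + 1)) - if i = 0 then 0 else x ^ (2 * j + 1)) *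
    ((x ^ (s + 1 + i) - 1) / (x - 1))
  have hF : ∀ a ∈ range (2 * (j + 1) + 1), (x ^ (2 * (j + 1)) -
      if a = 0 ∨ a = 2 * (j + 1) then 0 else x ^ (2 * (j + 1) - 1)) *
        ∑ d ∈ range (2 * (j + 1) + s + 1 - max a (2 * (j + 1) - a)), x ^ d =
      F (min a (2 * (j + 1) - a)) := by
    intro a ha
    rw [mem_range] at ha
    simp only [F, geom_sum_eq hx]
    congr 2
    · simp only [show min a (2 * (j + 1) - a) = 0 ↔ a = 0 ∨ a = 2 * (j + 1) by omega,
        show 2 * (j + 1) - 1 = 2 * j + 1 by omega]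
    · congr 2; omega
  have hF0 : F 0 = x ^ (2 * j + 2) * (x ^ (s + 1) - 1) / (x - 1) := by
    simp only [F, if_pos, sub_zero, add_zero, mul_div_assoc]
    ring_nf
  have hFsucc : ∀ i, F (i + 1) = x ^ (2 * j + 1) * (x ^ (s + 2) * x ^ i - 1) := by
    intro i
    simp only [F, Nat.add_one_ne_zero, if_false]
    field_simp
    ring
  rw [sum_congr rfl hF, sum_range_two_mul_add_one_min, sum_range_succ',
    sum_congr rfl fun i _ => hFsucc i, ← mul_sum, sum_sub_distrib, ← mul_sum, geom_sum_eq hx,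
    hF0, hFsucc, show 2 * (j + 1) - 1 = 2 * j + 1 by omega,
    show 2 * (j + 1) + s - (j + 1) + 1 = s + j + 2 by omega]
  simp only [sum_const, card_range, nsmul_eq_mul]
  push_cast
  field_simp
  ring

namespace IsPerfectRootedMary

variable {m r : ℕ} {W : Type} [Fintype W] {G : SimpleGraph W} [DecidableRel G.Adj] {ρ : W}

lemma card_descendants_one (hG : IsPerfectRootedMary m r G ρ) {w : W} (hw : G.dist ρ w < r) :
    #(G.descendants ρ w 1) = m := by
  obtain ⟨hT, hroot, hdeg, -, -, hleaf⟩ := hG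
  have hchildren :
      G.descendants ρ w 1 = {v ∈ G.neighborFinset w | G.dist ρ w + 1 = G.dist ρ v} := by
    ext v
    simp [dist_eq_one_iff_adj]
  rw [hchildren]
  by_cases hwρ : w = ρ
  · subst hwρ
    rw [filter_true_of_mem fun v hv => ?_, card_neighborFinset_eq_degree, hroot (by omega)]
    rw [mem_neighborFinset, ← dist_eq_one_iff_adj] at hv
    simp [hv]
  obtain ⟨p, hwp, hp⟩ := (hT.connected w ρ).exists_adj_dist_add_one_eq hwρ
  rw [SimpleGraph.dist_comm, SimpleGraph.dist_comm (u := w)] at hp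
  have hparent : {v ∈ G.neighborFinset w | ¬ G.dist ρ w + 1 = G.dist ρ v} = {p} := by
    ext v
    simp only [mem_filter, mem_neighborFinset, mem_singleton]
    constructor
    · rintro ⟨hwv, hv⟩
      have hv' := hT.dist_eq_dist_add_one_of_adj ρ hwv
      refine hT.eq_of_dist_add_dist_eq (x := ρ) (y := w) ?_ ?_ (by omega)
      · rw [SimpleGraph.dist_comm (u := v), dist_eq_one_iff_adj.mpr hwv]; omega
      · rw [SimpleGraph.dist_comm (u := p), dist_eq_one_iff_adj.mpr hwp]; omega
    · rintro rfl
      exact ⟨hwp, by omega⟩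
  have hdegw : G.degree w = m + 1 :=
    (hdeg w hwρ).resolve_left fun h => by have := hleaf w h; omega
  have := card_filter_add_card_filter_not (s := G.neighborFinset w)
    (p := fun v => G.dist ρ w + 1 = G.dist ρ v)
  rw [hparent, card_singleton, card_neighborFinset_eq_degree, hdegw] at this
  omega

lemma card_descendants (hG : IsPerfectRootedMary m r G ρ) {w : W} {a : ℕ}
    (ha : G.dist ρ w + a ≤ r) : #(G.descendants ρ w a) = m ^ a := by
  classical
  induction a with
  | zero => rw [hG.1.connected.descendants_zero, card_singleton, pow_zero]
  | succ a ih =>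
    rw [hG.1.connected.descendants_succ, card_biUnion, sum_const_nat (m := m), ih (by omega),
      pow_succ]
    · intro u hu
      rw [mem_descendants] at hu
      exact hG.card_descendants_one (by omega)
    · intro u hu u' hu' hne
      rw [mem_coe, mem_descendants] at hu hu'
      exact hG.1.disjoint_descendants hne (by omega) 1 1

lemma card_filter_dist_lt (hG : IsPerfectRootedMary m r G ρ) {N : ℕ} (hN : N ≤ r + 1) :
    #{v | G.dist ρ v < N} = ∑ d ∈ range N, m ^ d := by
  rw [card_eq_sum_card_fiberwise (f := G.dist ρ) (t := range N) (by intro v hv; simpa using hv)]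
  refine sum_congr rfl fun d hd => ?_
  rw [mem_range] at hd
  rw [← hG.card_descendants (w := ρ) (a := d) (by simp; omega), descendants_root]
  congr 1
  ext v
  simp only [mem_filter, mem_univ, true_and]
  exact ⟨fun h => h.2, fun h => ⟨h ▸ hd, h⟩⟩

lemma card_meetPairs_add_one_add_one (hG : IsPerfectRootedMary m r G ρ) {w : W} {a b : ℕ}
    (hmax : G.dist ρ w + max (a + 1) (b + 1) ≤ r) :
    #(G.meetPairs ρ w (a + 1) (b + 1)) = m ^ (a + 1 + (b + 1)) - m ^ (a + 1 + (b + 1) - 1) := by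
  classical
  have hT : G.IsTree := hG.1
  have hsplit := card_filter_add_card_filter_not (s := G.descendants ρ w (a + 1) ×ˢ
    G.descendants ρ w (b + 1)) (p := fun q => G.dist q.1 q.2 = a + 1 + (b + 1))
  have hnot : #((G.descendants ρ w 1).biUnion
      fun c => G.descendants ρ c a ×ˢ G.descendants ρ c b) = m * (m ^ a * m ^ b) := by
    rw [card_biUnion, sum_const_nat (m := m ^ a * m ^ b), hG.card_descendants_one (by omega)]
    · intro c hc
      rw [mem_descendants] at hc
      rw [card_product, hG.card_descendants (by omega), hG.card_descendants (by omega)]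
    · intro c hc c' hc' hne
      rw [mem_coe, mem_descendants] at hc hc'
      exact disjoint_product.mpr (Or.inl (hT.disjoint_descendants hne (by omega) a a))
  rw [hT.filter_dist_ne_eq_biUnion (by omega) (by omega), Nat.add_sub_cancel,
    Nat.add_sub_cancel, hnot, card_product, hG.card_descendants (by omega),
    hG.card_descendants (by omega)] at hsplit
  have hpow : m ^ (a + 1 + (b + 1) - 1) = m * (m ^ a * m ^ b) := by
    rw [show a + 1 + (b + 1) - 1 = 1 + a + b by omega, pow_add, pow_add, pow_one, mul_assoc]
  rw [meetPairs, hpow, pow_add]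
  omega

lemma card_meetPairs (hG : IsPerfectRootedMary m r G ρ) (w : W) (a b : ℕ) :
    #(G.meetPairs ρ w a b) = if G.dist ρ w + max a b ≤ r then
      m ^ (a + b) - (if a = 0 ∨ b = 0 then 0 else m ^ (a + b - 1)) else 0 := by
  have hT : G.IsTree := hG.1
  split_ifs with hmax hab
  · rcases hab with rfl | rfl
    · rw [hT.connected.meetPairs_zero_left, card_product, card_singleton, one_mul,
        hG.card_descendants (by omega), zero_add, Nat.sub_zero]
    · rw [hT.connected.meetPairs_zero_right, card_product, card_singleton, mul_one,
        hG.card_descendants (by omega), add_zero, Nat.sub_zero]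
  · obtain ⟨a, rfl⟩ : ∃ a', a = a' + 1 := ⟨a - 1, by omega⟩
    obtain ⟨b, rfl⟩ : ∃ b', b = b' + 1 := ⟨b - 1, by omega⟩
    exact hG.card_meetPairs_add_one_add_one hmax
  · obtain ⟨-, -, -, hle, -, -⟩ := hG
    refine card_eq_zero.mpr (eq_empty_of_forall_notMem fun q hq => hmax ?_)
    simp only [meetPairs, mem_filter, mem_product, mem_descendants] at hq
    have := hle q.1
    have := hle q.2
    omega

theorem card_filter_dist_eq (hG : IsPerfectRootedMary m r G ρ) (t : ℕ) :
    #{q : W × W | G.dist q.1 q.2 = t} = ∑ a ∈ range (t + 1),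
      (m ^ t - if a = 0 ∨ a = t then 0 else m ^ (t - 1)) *
        ∑ d ∈ range (r + 1 - max a (t - a)), m ^ d := by
  classical
  rw [hG.1.filter_dist_eq_eq_biUnion_meetPairs ρ t,
    card_biUnion (hG.1.pairwiseDisjoint_meetPairs ρ t), sum_product, sum_comm]
  refine sum_congr rfl fun a ha => ?_
  rw [mem_range] at ha
  simp_rw [hG.card_meetPairs, Nat.add_sub_cancel' (Nat.le_of_lt_succ ha),
    show t - a = 0 ↔ a = t by omega]
  rw [sum_ite, sum_const_zero, add_zero, sum_const, smul_eq_mul, mul_comm,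
    ← hG.card_filter_dist_lt (N := r + 1 - max a (t - a)) (by omega)]
  congr 2
  ext w
  simp only [mem_filter, mem_univ, true_and]
  omega

end IsPerfectRootedMary

theorem rooted_even_paths_large_depth (m k r : ℕ) (hm : 2 ≤ m)
    (hk : 1 ≤ k) (hr : 2 * k ≤ r)
    {W : Type} [Fintype W] [DecidableEq W] (G : SimpleGraph W) [DecidableRel G.Adj]
    (ρ : W) (hG : IsPerfectRootedMary m r G ρ) :
    (pathCount G (2 * k) : ℚ) =
      (m : ℚ) ^ (2 * k - 1) *
        ((1 / 2) * ((m : ℚ) + 1) * (((m : ℚ) ^ (r - k + 1) - 1) / ((m : ℚ) - 1)) -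
          (k : ℚ)) := by
  have hcount := hG.card_filter_dist_eq (2 * k)
  rw [← two_mul_pathCount G (by omega)] at hcount
  have hcoeff : ∀ a, ((m ^ (2 * k) - if a = 0 ∨ a = 2 * k then 0 else m ^ (2 * k - 1) : ℕ) : ℚ) =
      (m : ℚ) ^ (2 * k) - if a = 0 ∨ a = 2 * k then 0 else (m : ℚ) ^ (2 * k - 1) := by
    intro a
    split_ifs
    · simp
    · rw [Nat.cast_sub (Nat.pow_le_pow_right (by omega) (by omega))]
      push_cast
      rfl
  have hsum := congrArg (Nat.cast : ℕ → ℚ) hcount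
  simp only [Nat.cast_mul, Nat.cast_sum, hcoeff, Nat.cast_pow, Nat.cast_ofNat] at hsum
  rw [sum_range_mul_geom_sum_eq (by norm_cast; omega) hk hr] at hsum
  linarith
end

section
/- Let m ≥ 2 and let k, r be integers with 1 ≤ k ≤ r. Then the number of paths of length t = 2k−1 in the perfect unrooted m-ary tree of diameter D = 2r−1 equals (m^(2k−2)/(m−1)) · ( 2·m^(r−k+1) − (m+1) ). -/
open SimpleGraph Finset

/-- `IsPerfectUnrootedMary m d H` says that `H` is the perfect unrooted `m`-ary tree of
diameter `d`: a tree in which every vertex has degree `1` or `m + 1`, whose maximum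
distance between two vertices is `d`, and in which every degree-`1` vertex is at
distance `d` from some other vertex.  (For `d = 0` the degree condition is dropped,
so that the one-vertex tree is the perfect tree of diameter `0`.) -/
def IsPerfectUnrootedMary (m d : ℕ) {W : Type} [Fintype W] (H : SimpleGraph W)
    [DecidableRel H.Adj] : Prop :=
  H.IsTree ∧
    (0 < d → ∀ v : W, H.degree v = 1 ∨ H.degree v = m + 1) ∧
    (∀ u v : W, H.dist u v ≤ d) ∧
    (∃ u v : W, H.dist u v = d) ∧
    (∀ v : W, H.degree v = 1 → ∃ u : W, H.dist u v = d)

/-!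
A perfect unrooted `m`-ary tree of diameter `2R + 1` has a central edge `c₁c₂`, the middle edge of
a longest path; the depth of a vertex is its distance to the nearer of `c₁`, `c₂`. All depths are
at most `R` and leaves have depth `R`, so every vertex of depth `< R` has `m + 1` neighbours and
there are `2 m ^ j` vertices of depth `j`.

A path of length `2K + 1` has a unique middle edge `ab`; its ends are a vertex at distance `K`
from `a` on the side of `a` and one at distance `K` from `b` on the side of `b`. If `a` and `b`
both have depth at most `q = R - K`, each side offers `m ^ K` such vertices; otherwise the side of
the deeper end is empty. The vertices of depth `≤ q` span a subtree, which has
`∑_{j ≤ q} 2 m ^ j - 1` edges, and summing the geometric series gives the formula.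
-/

namespace SimpleGraph

variable {V : Type*} {G : SimpleGraph V} {u v x y z a b : V}

lemma Walk.dist_getVert_of_length_eq_dist {p : G.Walk u v} (hp : p.length = G.dist u v)
    {i : ℕ} (hi : i ≤ p.length) :
    G.dist u (p.getVert i) = i ∧ G.dist (p.getVert i) v = p.length - i := by
  have h₁ := dist_le (p.take i)
  have h₂ := dist_le (p.drop i)
  have h₃ := (p.take i).reachable.dist_triangle_left v
  simp only [Walk.take_length, Walk.drop_length] at h₁ h₂
  omega

lemma Walk.dist_add_dist_of_mem_support {p : G.Walk u v} (hp : p.length = G.dist u v)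
    (hx : x ∈ p.support) : G.dist u x + G.dist x v = G.dist u v := by
  obtain ⟨i, rfl, hi⟩ := Walk.mem_support_iff_exists_getVert.mp hx
  have := Walk.dist_getVert_of_length_eq_dist hp hi
  omega

lemma exists_adj_dist_eq_of_dist_eq_add_one {s : ℕ} (h : G.dist u z = s + 1) :
    ∃ x, G.Adj x z ∧ G.dist u x = s := by
  obtain ⟨p, hp⟩ := exists_walk_of_dist_ne_zero (G := G) (u := u) (v := z) (by omega)
  have hadj := p.adj_getVert_succ (i := s) (by omega)
  rw [show s + 1 = p.length by omega, Walk.getVert_length] at hadj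
  exact ⟨p.getVert s, hadj, (Walk.dist_getVert_of_length_eq_dist hp (by omega)).1⟩

namespace IsTree

variable (hG : G.IsTree)
include hG

lemma length_eq_dist_of_isPath {p : G.Walk u v} (hp : p.IsPath) : p.length = G.dist u v := by
  obtain ⟨q, hq, hql⟩ := hG.connected.exists_path_of_dist u v
  rw [(hG.existsUnique_path u v).unique hp hq, hql]

lemma eq_of_dist_add_dist_eq_s14 (hx : G.dist u x + G.dist x v = G.dist u v)
    (hy : G.dist u y + G.dist y v = G.dist u v) (hxy : G.dist u x = G.dist u y) : x = y := by
  obtain ⟨p, hp⟩ := hG.connected.exists_walk_length_eq_dist u x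
  obtain ⟨p', hp'⟩ := hG.connected.exists_walk_length_eq_dist x v
  obtain ⟨q, hq⟩ := hG.connected.exists_walk_length_eq_dist u y
  obtain ⟨q', hq'⟩ := hG.connected.exists_walk_length_eq_dist y v
  have hpath : ∀ {w : V} (r : G.Walk u w) (r' : G.Walk w v), r.length = G.dist u w →
      r'.length = G.dist w v → G.dist u w + G.dist w v = G.dist u v → (r.append r').IsPath :=
    fun r r' hr hr' h => (r.append r').isPath_of_length_eq_dist (by simp [hr, hr', h])
  have heq := (hG.existsUnique_path u v).unique (hpath p p' hp hp' hx) (hpath q q' hq hq' hy)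
  have := congrArg (·.getVert (G.dist u x)) heq
  simpa [Walk.getVert_append, hp, hq, hxy] using this

lemma eq_of_adj_of_dist_add_one_eq (hx : G.Adj x z) (hy : G.Adj y z)
    (hxz : G.dist u x + 1 = G.dist u z) (hyz : G.dist u y + 1 = G.dist u z) : x = y :=
  hG.eq_of_dist_add_dist_eq_s14 (u := u) (x := x) (y := y) (v := z)
    (by rwa [dist_eq_one_iff_adj.mpr hx]) (by rwa [dist_eq_one_iff_adj.mpr hy]) (by omega)

lemma dist_eq_add_one_of_mem_support (hab : G.Adj a b) {p : G.Walk u a}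
    (hp : p.length = G.dist u a) (hu : G.dist u b = G.dist u a + 1) (hx : x ∈ p.support) :
    G.dist x b = G.dist x a + 1 := by
  have hsplit := Walk.dist_add_dist_of_mem_support hp hx
  have htri : G.dist u b ≤ G.dist u x + G.dist x b := hG.connected.dist_triangle
  have := hG.dist_eq_dist_add_one_of_adj x hab
  omega

lemma dist_eq_dist_add_one_add_dist (hab : G.Adj a b) (hu : G.dist u b = G.dist u a + 1)
    (hv : G.dist v a = G.dist v b + 1) : G.dist u v = G.dist u a + 1 + G.dist b v := by
  obtain ⟨p, hp, hpl⟩ := hG.connected.exists_path_of_dist u a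
  obtain ⟨q, hq, hql⟩ := hG.connected.exists_path_of_dist v b
  -- the two geodesics lie on opposite sides of `ab`, so joining them through `ab` gives a path
  have hpath : (p.append (.cons hab q.reverse)).IsPath := by
    rw [Walk.isPath_def, Walk.support_append, Walk.support_cons, List.tail_cons,
      Walk.support_reverse, List.nodup_append', List.nodup_reverse]
    refine ⟨hp.support_nodup, hq.support_nodup, fun x hxp hxq => ?_⟩
    have h₁ := hG.dist_eq_add_one_of_mem_support hab hpl hu hxp
    have h₂ := hG.dist_eq_add_one_of_mem_support hab.symm hql hv (List.mem_reverse.mp hxq)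
    omega
  have := hG.length_eq_dist_of_isPath hpath
  simp only [Walk.length_append, Walk.length_cons, Walk.length_reverse, hpl, hql] at this
  rw [dist_comm (u := v)] at this
  omega

end IsTree

section SideSphere

variable [Fintype V] {c c' : V} {s : ℕ}

/-- In a tree, `G.dist x b = G.dist x a + 1` says that `x` lies on the side of `a` of the edge
`ab`. -/
noncomputable def sideSphere (G : SimpleGraph V) (a b : V) (s : ℕ) : Finset V :=
  univ.filter fun x => G.dist x a = s ∧ G.dist x b = s + 1

lemma mem_sideSphere : x ∈ G.sideSphere a b s ↔ G.dist x a = s ∧ G.dist x b = s + 1 := by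
  simp [sideSphere]

lemma sideSphere_zero (hab : G.Adj a b) : G.sideSphere a b 0 = {a} := by
  ext x
  simp only [mem_sideSphere, mem_singleton, zero_add, dist_eq_one_iff_adj]
  constructor
  · rintro ⟨hxa, hxb⟩
    refine (dist_eq_zero_iff_eq_or_not_reachable.mp hxa).resolve_right fun h => h ?_
    exact hxb.reachable.trans hab.symm.reachable
  · rintro rfl
    exact ⟨dist_self, hab⟩

lemma IsTree.disjoint_sideSphere (hG : G.IsTree) (hca : G.Adj c a) (hc'a : G.Adj c' a)
    (hne : c ≠ c') : Disjoint (G.sideSphere c a s) (G.sideSphere c' a s) := by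
  refine Finset.disjoint_left.mpr fun x hx hx' => hne ?_
  rw [mem_sideSphere] at hx hx'
  exact hG.eq_of_adj_of_dist_add_one_eq (u := x) hca hc'a (by omega) (by omega)

variable [DecidableEq V] [DecidableRel G.Adj]

lemma IsTree.sideSphere_add_one (hG : G.IsTree) (hab : G.Adj a b) (s : ℕ) :
    G.sideSphere a b (s + 1) =
      ((G.neighborFinset a).erase b).biUnion (G.sideSphere · a s) := by
  ext x
  simp only [mem_sideSphere, mem_biUnion, mem_erase, mem_neighborFinset]
  constructor
  · rintro ⟨hxa, hxb⟩
    obtain ⟨c, hca, hxc⟩ := exists_adj_dist_eq_of_dist_eq_add_one hxa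
    exact ⟨c, ⟨by rintro rfl; omega, hca.symm⟩, hxc, hxa⟩
  · rintro ⟨c, ⟨hcb, hac⟩, hxc, hxa⟩
    refine ⟨hxa, ?_⟩
    rcases hG.dist_eq_dist_add_one_of_adj x hab with h | h
    · exact absurd
        (hG.eq_of_adj_of_dist_add_one_eq (u := x) hac.symm hab.symm (by omega) (by omega)) hcb
    · omega

lemma IsTree.card_sideSphere_eq_pow (hG : G.IsTree) {m : ℕ} (hab : G.Adj a b)
    (hdeg : ∀ i < s, ∀ y ∈ G.sideSphere a b i, G.degree y = m + 1) :
    #(G.sideSphere a b s) = m ^ s := by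
  induction s generalizing a b with
  | zero => rw [sideSphere_zero hab, card_singleton, pow_zero]
  | succ s ih =>
    have hdega : G.degree a = m + 1 :=
      hdeg 0 s.succ_pos a (by rw [sideSphere_zero hab]; exact mem_singleton_self a)
    rw [hG.sideSphere_add_one hab, card_biUnion]
    · have hchild : ∀ c ∈ (G.neighborFinset a).erase b, #(G.sideSphere c a s) = m ^ s := by
        intro c hc
        refine ih ((G.mem_neighborFinset a c).mp (mem_of_mem_erase hc)).symm fun i hi y hy => ?_
        refine hdeg (i + 1) (by omega) y ?_
        rw [hG.sideSphere_add_one hab]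
        exact mem_biUnion.mpr ⟨c, hc, hy⟩
      rw [sum_congr rfl hchild, sum_const, smul_eq_mul,
        card_erase_of_mem ((G.mem_neighborFinset a b).mpr hab), card_neighborFinset_eq_degree,
        hdega, pow_succ, Nat.add_sub_cancel, mul_comm]
    · intro c hc c' hc' hne
      exact hG.disjoint_sideSphere ((G.mem_neighborFinset a c).mp (mem_of_mem_erase hc)).symm
        ((G.mem_neighborFinset a c').mp (mem_of_mem_erase hc')).symm hne

end SideSphere

section Darts

variable [Fintype V] [DecidableEq V]

lemma IsTree.card_dist_eq_sum_card_sideSphere_mul (hG : G.IsTree) [DecidableRel G.Adj] (K : ℕ) :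
    #{uv : V × V | G.dist uv.1 uv.2 = 2 * K + 1} =
      ∑ ab : V × V with G.Adj ab.1 ab.2,
        #(G.sideSphere ab.1 ab.2 K) * #(G.sideSphere ab.2 ab.1 K) := by
  have hmiddle : ∀ {u v a b : V}, G.Adj a b → u ∈ G.sideSphere a b K →
      v ∈ G.sideSphere b a K → G.dist u v = 2 * K + 1 := by
    intro u v a b hab hu hv
    rw [mem_sideSphere] at hu hv
    have := hG.dist_eq_dist_add_one_add_dist (u := u) (v := v) hab (by omega) (by omega)
    rw [dist_comm (u := b)] at this
    omega
  have hdecomp : ({uv : V × V | G.dist uv.1 uv.2 = 2 * K + 1} : Finset _) =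
      ({ab : V × V | G.Adj ab.1 ab.2} : Finset _).biUnion
        fun ab => G.sideSphere ab.1 ab.2 K ×ˢ G.sideSphere ab.2 ab.1 K := by
    ext ⟨u, v⟩
    simp only [mem_filter, mem_univ, true_and, mem_biUnion, mem_product, Prod.exists]
    constructor
    · intro huv
      obtain ⟨p, hp⟩ := hG.connected.exists_walk_length_eq_dist u v
      have ha := Walk.dist_getVert_of_length_eq_dist hp (i := K) (by omega)
      have hb := Walk.dist_getVert_of_length_eq_dist hp (i := K + 1) (by omega)
      rw [dist_comm (u := p.getVert K)] at ha
      rw [dist_comm (u := p.getVert (K + 1))] at hb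
      refine ⟨p.getVert K, p.getVert (K + 1), p.adj_getVert_succ (by omega), ?_, ?_⟩ <;>
        rw [mem_sideSphere] <;> omega
    · rintro ⟨a, b, hab, hu, hv⟩
      exact hmiddle hab hu hv
  rw [hdecomp, card_biUnion]
  · exact sum_congr rfl fun _ _ => card_product _ _
  · rintro ⟨a, b⟩ hab ⟨a', b'⟩ hab' hne
    simp only [coe_filter, mem_univ, true_and, Set.mem_ofPred_eq] at hab hab'
    refine Finset.disjoint_left.mpr fun ⟨u, v⟩ huv huv' => hne ?_
    simp only [mem_product] at huv huv'
    have hL := hmiddle hab huv.1 huv.2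
    simp only [mem_sideSphere] at huv huv'
    have ha : a = a' := hG.eq_of_dist_add_dist_eq_s14 (u := u) (v := v) (by
      rw [dist_comm (u := a)]; omega) (by rw [dist_comm (u := a')]; omega) (by omega)
    have hb : b = b' := hG.eq_of_dist_add_dist_eq_s14 (u := u) (v := v) (by
      rw [dist_comm (u := b)]; omega) (by rw [dist_comm (u := b')]; omega) (by omega)
    rw [ha, hb]

lemma IsTree.card_adj_mem_add_two (hG : G.IsTree) [DecidableRel G.Adj] {r : V} {S : Finset V}
    (hr : r ∈ S) (hS : ∀ x ∈ S, ∀ y, G.Adj x y → G.dist r y + 1 = G.dist r x → y ∈ S) :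
    #{ab : V × V | G.Adj ab.1 ab.2 ∧ ab.1 ∈ S ∧ ab.2 ∈ S} + 2 = 2 * #S := by
  set D : Finset (V × V) := {ab | G.Adj ab.1 ab.2 ∧ ab.1 ∈ S ∧ ab.2 ∈ S}
  -- a dart pointing towards `r` is determined by its tail, any vertex of `S.erase r`;
  -- the other darts are their reversals
  set up := D.filter fun ab => G.dist r ab.2 + 1 = G.dist r ab.1
  have hup : #up = #(S.erase r) := by
    refine card_bij (fun ab _ => ab.1) ?_ ?_ ?_
    · rintro ⟨a, b⟩ h
      simp only [up, D, mem_filter, mem_univ, true_and] at h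
      refine mem_erase.mpr ⟨?_, h.1.2.1⟩
      rintro rfl
      simp at h
    · rintro ⟨a, b⟩ h ⟨a', b'⟩ h' (rfl : a = a')
      simp only [up, D, mem_filter, mem_univ, true_and] at h h'
      rw [hG.eq_of_adj_of_dist_add_one_eq h.1.1.symm h'.1.1.symm h.2 h'.2]
    · intro a ha
      obtain ⟨hne, haS⟩ := mem_erase.mp ha
      obtain ⟨j, hj⟩ := Nat.exists_eq_add_one.mpr (hG.connected.pos_dist_of_ne hne.symm)
      obtain ⟨b, hba, hb⟩ := exists_adj_dist_eq_of_dist_eq_add_one hj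
      refine ⟨(a, b), ?_, rfl⟩
      simp only [up, D, mem_filter, mem_univ, true_and]
      exact ⟨⟨hba.symm, haS, hS a haS b hba.symm (by omega)⟩, by omega⟩
  have hdown : #(D.filter fun ab => ¬G.dist r ab.2 + 1 = G.dist r ab.1) = #up := by
    refine card_bij (fun ab _ => ab.swap) ?_ (fun _ _ _ _ h => Prod.swap_injective h) ?_
    · rintro ⟨a, b⟩ h
      simp only [up, D, mem_filter, mem_univ, true_and, Prod.swap_prod_mk] at h ⊢
      have := hG.dist_eq_dist_add_one_of_adj r h.1.1
      exact ⟨⟨h.1.1.symm, h.1.2.2, h.1.2.1⟩, by omega⟩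
    · rintro ⟨a, b⟩ h
      simp only [up, D, mem_filter, mem_univ, true_and] at h
      exact ⟨(b, a), by simp only [D, mem_filter, mem_univ, true_and]; exact
        ⟨⟨h.1.1.symm, h.1.2.2, h.1.2.1⟩, by omega⟩, rfl⟩
  have hsplit : #up + #(D.filter fun ab => ¬G.dist r ab.2 + 1 = G.dist r ab.1) = #D :=
    card_filter_add_card_filter_not _
  have hS := card_erase_add_one hr
  omega

end Darts

section Depth

variable {c₁ c₂ : V}

noncomputable def depth (G : SimpleGraph V) (c₁ c₂ x : V) : ℕ :=
  min (G.dist x c₁) (G.dist x c₂)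

lemma Connected.depth_le_depth_add_dist (hG : G.Connected) (x y : V) :
    G.depth c₁ c₂ y ≤ G.depth c₁ c₂ x + G.dist y x := by
  have h₁ : G.dist y c₁ ≤ G.dist y x + G.dist x c₁ := hG.dist_triangle
  have h₂ : G.dist y c₂ ≤ G.dist y x + G.dist x c₂ := hG.dist_triangle
  unfold depth
  omega

lemma Connected.dist_le_depth_add_depth_add_one (hG : G.Connected) (hc : G.Adj c₁ c₂)
    (x y : V) : G.dist x y ≤ G.depth c₁ c₂ x + G.depth c₁ c₂ y + 1 := by
  have h₁ : G.dist x y ≤ G.dist x c₁ + G.dist c₁ y := hG.dist_triangle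
  have h₂ : G.dist x y ≤ G.dist x c₂ + G.dist c₂ y := hG.dist_triangle
  have h₃ : G.dist c₁ y ≤ G.dist c₁ c₂ + G.dist c₂ y := hG.dist_triangle
  have h₄ : G.dist c₂ y ≤ G.dist c₂ c₁ + G.dist c₁ y := hG.dist_triangle
  rw [dist_eq_one_iff_adj.mpr hc] at h₃
  rw [dist_eq_one_iff_adj.mpr hc.symm] at h₄
  rw [dist_comm (u := c₁), dist_comm (u := c₂)] at *
  unfold depth
  omega

namespace IsTree

variable (hG : G.IsTree) (hc : G.Adj c₁ c₂)
include hG hc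

lemma depth_cases (x : V) :
    (G.dist x c₁ = G.depth c₁ c₂ x ∧ G.dist x c₂ = G.depth c₁ c₂ x + 1) ∨
      (G.dist x c₂ = G.depth c₁ c₂ x ∧ G.dist x c₁ = G.depth c₁ c₂ x + 1) := by
  have := hG.dist_eq_dist_add_one_of_adj x hc
  unfold depth
  omega

lemma dist_eq_depth_add_depth_add_one (hx : G.dist x c₂ = G.dist x c₁ + 1)
    (hy : G.dist y c₁ = G.dist y c₂ + 1) :
    G.dist x y = G.depth c₁ c₂ x + G.depth c₁ c₂ y + 1 := by
  have := hG.dist_eq_dist_add_one_add_dist hc hx hy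
  rw [dist_comm (u := c₂)] at this
  unfold depth
  omega

lemma depth_eq_zero_of_adj_of_depth_eq (hab : G.Adj a b)
    (h : G.depth c₁ c₂ a = G.depth c₁ c₂ b) : G.depth c₁ c₂ a = 0 := by
  have h₁ := hG.dist_ne_of_adj c₁ hab
  have h₂ := hG.dist_ne_of_adj c₂ hab
  rw [dist_comm (u := c₁), dist_comm (u := c₁)] at h₁
  rw [dist_comm (u := c₂), dist_comm (u := c₂)] at h₂
  have hab₁ := dist_eq_one_iff_adj.mpr hab
  rcases hG.depth_cases hc a with ha | ha <;> rcases hG.depth_cases hc b with hb | hb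
  · omega
  · have := hG.dist_eq_depth_add_depth_add_one hc (x := a) (y := b) (by omega) (by omega)
    omega
  · have := hG.dist_eq_depth_add_depth_add_one hc (x := b) (y := a) (by omega) (by omega)
    rw [dist_comm] at this
    omega
  · omega

lemma depth_of_mem_sideSphere [Fintype V] (hab : G.Adj a b)
    (h : G.depth c₁ c₂ a = G.depth c₁ c₂ b + 1) {s : ℕ} (hx : x ∈ G.sideSphere a b s) :
    G.depth c₁ c₂ x = G.depth c₁ c₂ a + s := by
  rw [mem_sideSphere] at hx
  have hside : ∀ c, G.dist a c = G.dist b c + 1 ∨ G.dist b c = G.dist a c + 1 := fun c => by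
    rw [dist_comm (u := a), dist_comm (u := b)]
    exact hG.dist_eq_dist_add_one_of_adj c hab
  have h₁ := hside c₁
  have h₂ := hside c₂
  have hb := hG.depth_cases hc b
  unfold depth at h hb ⊢
  have hx₁ := hG.dist_eq_dist_add_one_add_dist (u := x) (v := c₁) hab (by omega) (by
    rw [dist_comm (u := c₁), dist_comm (u := c₁)]; omega)
  have hx₂ := hG.dist_eq_dist_add_one_add_dist (u := x) (v := c₂) hab (by omega) (by
    rw [dist_comm (u := c₂), dist_comm (u := c₂)]; omega)
  omega

lemma card_depth_eq [Fintype V] (j : ℕ) :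
    #{x | G.depth c₁ c₂ x = j} = #(G.sideSphere c₁ c₂ j) + #(G.sideSphere c₂ c₁ j) := by
  classical
  rw [← card_union_of_disjoint]
  · congr 1
    ext x
    simp only [mem_filter, mem_univ, true_and, mem_union, mem_sideSphere]
    rcases hG.depth_cases hc x with hx | hx <;> omega
  · refine Finset.disjoint_left.mpr fun x hx hx' => ?_
    rw [mem_sideSphere] at hx hx'
    omega

lemma depth_le_of_dist_add_one_eq (hy : G.dist c₁ y + 1 = G.dist c₁ x) :
    G.depth c₁ c₂ y ≤ G.depth c₁ c₂ x := by
  have hx := hG.depth_cases hc x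
  have hy' : G.depth c₁ c₂ y ≤ G.dist y c₁ := min_le_left _ _
  rw [dist_comm (u := c₁), dist_comm (u := c₁)] at hy
  omega

end IsTree

end Depth

lemma IsTree.exists_adj_forall_depth_le (hG : G.IsTree) {R : ℕ}
    (hle : ∀ u v, G.dist u v ≤ 2 * R + 1) (hex : ∃ u v, G.dist u v = 2 * R + 1) :
    ∃ c₁ c₂, G.Adj c₁ c₂ ∧ ∀ x, G.depth c₁ c₂ x ≤ R := by
  obtain ⟨u, v, huv⟩ := hex
  obtain ⟨p, hp⟩ := hG.connected.exists_walk_length_eq_dist u v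
  have h₁ := Walk.dist_getVert_of_length_eq_dist hp (i := R) (by omega)
  have h₂ := Walk.dist_getVert_of_length_eq_dist hp (i := R + 1) (by omega)
  have hc : G.Adj (p.getVert R) (p.getVert (R + 1)) := p.adj_getVert_succ (by omega)
  rw [dist_comm (v := v)] at h₁ h₂
  refine ⟨_, _, hc, fun x => ?_⟩
  rcases hG.depth_cases hc x with hx | hx
  · have := hG.dist_eq_depth_add_depth_add_one hc (x := x) (y := v) (by omega) (by omega)
    have := hle x v
    unfold depth at *
    omega
  · have := hG.dist_eq_depth_add_depth_add_one hc (x := u) (y := x) (by omega) (by omega)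
    have := hle u x
    unfold depth at *
    omega

section Perfect

variable [Fintype V] [DecidableEq V] [DecidableRel G.Adj] {c₁ c₂ : V} {m R : ℕ}

lemma IsTree.card_sideSphere_of_depth_add_le (hG : G.IsTree)
    (hdeg : ∀ x, G.depth c₁ c₂ x < R → G.degree x = m + 1) (hab : G.Adj a b) {s : ℕ}
    (h : G.depth c₁ c₂ a + s ≤ R) : #(G.sideSphere a b s) = m ^ s :=
  hG.card_sideSphere_eq_pow hab fun i hi y hy => hdeg y <| by
    have := hG.connected.depth_le_depth_add_dist (c₁ := c₁) (c₂ := c₂) a y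
    rw [(mem_sideSphere.mp hy).1] at this
    omega

lemma IsTree.card_depth_eq_two_mul_pow (hG : G.IsTree) (hc : G.Adj c₁ c₂)
    (hdeg : ∀ x, G.depth c₁ c₂ x < R → G.degree x = m + 1) {j : ℕ} (hj : j ≤ R) :
    #{x | G.depth c₁ c₂ x = j} = 2 * m ^ j := by
  have h₁ : G.depth c₁ c₂ c₁ = 0 := by simp [depth]
  have h₂ : G.depth c₁ c₂ c₂ = 0 := by simp [depth]
  rw [hG.card_depth_eq hc, hG.card_sideSphere_of_depth_add_le hdeg hc (by omega),
    hG.card_sideSphere_of_depth_add_le hdeg hc.symm (by omega), two_mul]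

lemma IsTree.card_depth_le (hG : G.IsTree) (hc : G.Adj c₁ c₂)
    (hdeg : ∀ x, G.depth c₁ c₂ x < R → G.degree x = m + 1) {q : ℕ} (hq : q ≤ R) :
    #{x | G.depth c₁ c₂ x ≤ q} = ∑ j ∈ range (q + 1), 2 * m ^ j := by
  rw [card_eq_sum_card_fiberwise (f := G.depth c₁ c₂) (t := range (q + 1))
    fun x hx => by simpa [Nat.lt_succ_iff] using hx]
  refine sum_congr rfl fun j hj => ?_
  rw [mem_range] at hj
  rw [filter_filter, ← hG.card_depth_eq_two_mul_pow hc hdeg (by omega)]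
  congr 1
  exact filter_congr fun x _ => by omega

lemma IsTree.card_sideSphere_mul_card_sideSphere (hG : G.IsTree) (hc : G.Adj c₁ c₂)
    {K q : ℕ} (hR : ∀ x, G.depth c₁ c₂ x ≤ K + q)
    (hdeg : ∀ x, G.depth c₁ c₂ x < K + q → G.degree x = m + 1) (hab : G.Adj a b) :
    #(G.sideSphere a b K) * #(G.sideSphere b a K) =
      if G.depth c₁ c₂ a ≤ q ∧ G.depth c₁ c₂ b ≤ q then m ^ (2 * K) else 0 := by
  have hempty : ∀ {a b}, G.Adj a b → G.depth c₁ c₂ a = G.depth c₁ c₂ b + 1 →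
      q < G.depth c₁ c₂ a → #(G.sideSphere a b K) = 0 := fun hab h hq =>
    card_eq_zero.mpr <| eq_empty_of_forall_notMem fun x hx => by
      have := hG.depth_of_mem_sideSphere hc hab h hx
      have := hR x
      omega
  have hab₁ := hG.connected.depth_le_depth_add_dist (c₁ := c₁) (c₂ := c₂) a b
  have hab₂ := hG.connected.depth_le_depth_add_dist (c₁ := c₁) (c₂ := c₂) b a
  rw [dist_eq_one_iff_adj.mpr hab] at hab₂
  rw [dist_eq_one_iff_adj.mpr hab.symm] at hab₁
  split_ifs with h
  · rw [hG.card_sideSphere_of_depth_add_le hdeg hab (by omega),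
      hG.card_sideSphere_of_depth_add_le hdeg hab.symm (by omega), ← pow_add, two_mul]
  · rcases lt_trichotomy (G.depth c₁ c₂ a) (G.depth c₁ c₂ b) with hlt | heq | hgt
    · rw [hempty hab.symm (by omega) (by omega), mul_zero]
    · have := hG.depth_eq_zero_of_adj_of_depth_eq hc hab heq
      omega
    · rw [hempty hab (by omega) (by omega), zero_mul]

end Perfect

end SimpleGraph

section PathCount

variable {V : Type} [Fintype V] [DecidableEq V] {G : SimpleGraph V}

lemma two_mul_pathCount_s14 {t : ℕ} (ht : t ≠ 0) :
    2 * pathCount G t = #{uv : V × V | G.dist uv.1 uv.2 = t} := by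
  set S : Finset (V × V) := {uv | G.dist uv.1 uv.2 = t}
  have himage : pathCount G t = #(S.image Sym2.mk.uncurry) := by
    rw [pathCount]
    congr 1
    ext p
    induction p using Sym2.ind
    simp only [S, mem_filter, mem_univ, true_and, mem_image, Prod.exists, Sym2.eq_iff,
      Function.uncurry_apply_pair]
    grind
  have hfiber : ∀ p ∈ S.image Sym2.mk.uncurry, #{uv ∈ S | Sym2.mk.uncurry uv = p} = 2 := by
    simp only [mem_image]
    rintro _ ⟨⟨u, v⟩, huv, rfl⟩
    have hne : u ≠ v := by rintro rfl; simp [S] at huv; omega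
    have : {uv ∈ S | Sym2.mk.uncurry uv = Sym2.mk.uncurry (u, v)} = {(u, v), (v, u)} := by
      ext ⟨x, y⟩
      simp only [S, mem_filter, mem_univ, true_and, Function.uncurry_apply_pair,
        mem_insert, mem_singleton, Prod.mk.injEq] at huv ⊢
      grind [SimpleGraph.dist_comm]
    rw [this, card_pair (by simp [hne])]
  rw [himage, card_eq_sum_card_image Sym2.mk.uncurry S, sum_const_nat hfiber, mul_comm]

lemma SimpleGraph.IsTree.pathCount_add_pow [DecidableRel G.Adj] {c₁ c₂ : V} {m K q : ℕ}
    (hG : G.IsTree) (hc : G.Adj c₁ c₂) (hR : ∀ x, G.depth c₁ c₂ x ≤ K + q)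
    (hdeg : ∀ x, G.depth c₁ c₂ x < K + q → G.degree x = m + 1) :
    pathCount G (2 * K + 1) + m ^ (2 * K) = m ^ (2 * K) * ∑ j ∈ range (q + 1), 2 * m ^ j := by
  have hpairs := two_mul_pathCount_s14 (G := G) (t := 2 * K + 1) (by omega)
  rw [hG.card_dist_eq_sum_card_sideSphere_mul,
    sum_congr rfl fun ab hab => hG.card_sideSphere_mul_card_sideSphere hc hR hdeg
      (mem_filter.mp hab).2,
    sum_ite, sum_const_zero, add_zero, sum_const, smul_eq_mul, filter_filter] at hpairs
  have hdarts := hG.card_adj_mem_add_two (r := c₁) (S := {x | G.depth c₁ c₂ x ≤ q})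
    (by simp [depth]) fun x hx y _ hy => by
      simp only [mem_filter, mem_univ, true_and] at hx ⊢
      exact (hG.depth_le_of_dist_add_one_eq hc hy).trans hx
  simp only [mem_filter, mem_univ, true_and] at hdarts
  rw [hG.card_depth_le hc hdeg (by omega)] at hdarts
  have := congrArg (· * m ^ (2 * K)) hdarts
  simp only [add_mul] at this
  linarith

end PathCount

theorem unrooted_oddD_odd_paths (m k r : ℕ) (hm : 2 ≤ m)
    (hk : 1 ≤ k) (hkr : k ≤ r)
    {W : Type} [Fintype W] [DecidableEq W] (G : SimpleGraph W) [DecidableRel G.Adj]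
    (hG : IsPerfectUnrootedMary m (2 * r - 1) G) :
    (pathCount G (2 * k - 1) : ℚ) =
      (m : ℚ) ^ (2 * k - 2) / ((m : ℚ) - 1) *
        (2 * (m : ℚ) ^ (r - k + 1) - ((m : ℚ) + 1)) := by
  obtain ⟨hT, hdeg, hle, hex, hleaf⟩ := hG
  obtain ⟨K, rfl⟩ : ∃ K, k = K + 1 := ⟨k - 1, by omega⟩
  obtain ⟨q, rfl⟩ : ∃ q, r = K + 1 + q := ⟨r - (K + 1), by omega⟩
  rw [show 2 * (K + 1 + q) - 1 = 2 * (K + q) + 1 by omega] at hdeg hle hex hleaf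
  obtain ⟨c₁, c₂, hc, hR⟩ := hT.exists_adj_forall_depth_le hle hex
  have hinner : ∀ x, G.depth c₁ c₂ x < K + q → G.degree x = m + 1 := fun x hx =>
    (hdeg (by omega) x).resolve_left fun hleaf₁ => by
      obtain ⟨u, hu⟩ := hleaf x hleaf₁
      have := hT.connected.dist_le_depth_add_depth_add_one hc u x
      have := hR u
      omega
  have hcount : (pathCount G (2 * K + 1) : ℚ) + m ^ (2 * K) =
      m ^ (2 * K) * (2 * ∑ j ∈ range (q + 1), (m : ℚ) ^ j) := by
    rw [mul_sum]
    exact_mod_cast hT.pathCount_add_pow hc hR hinner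
  have hgeom := geom_sum_mul (m : ℚ) (q + 1)
  have hm₁ : (m : ℚ) - 1 ≠ 0 := by
    have : (2 : ℚ) ≤ m := by exact_mod_cast hm
    linarith
  rw [show 2 * (K + 1) - 1 = 2 * K + 1 by omega, show 2 * (K + 1) - 2 = 2 * K by omega,
    show K + 1 + q - (K + 1) + 1 = q + 1 by omega]
  field_simp
  linear_combination ((m : ℚ) - 1) * hcount + 2 * (m : ℚ) ^ (2 * K) * hgeom
end

section
/- Let m ≥ 2 and let k, r be integers with 1 ≤ k ≤ r. Then the number of paths of length t = 2k−1 in the perfect unrooted m-ary tree of diameter D = 2r equals (m^(2k−2)/(m−1)) · ( (m+1)·m^(r−k+1) − (m+1) ). -/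
open SimpleGraph Finset

namespace SimpleGraph

/-! ## Trees and leaves -/

variable {V : Type*} {G : SimpleGraph V} {u w x y z : V}

lemma Connected.exists_adj_dist_add_one_eq (hG : G.Connected) (hxw : x ≠ w) :
    ∃ y, G.Adj x y ∧ G.dist y w + 1 = G.dist x w := by
  obtain ⟨p, hp⟩ := hG.exists_walk_length_eq_dist x w
  cases p with
  | nil => exact absurd rfl hxw
  | @cons _ y _ hxy q =>
    have h₁ := dist_le q
    have h₂ : G.dist x w ≤ G.dist x y + G.dist y w := hG.dist_triangle
    rw [dist_eq_one_iff_adj.mpr hxy] at h₂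
    rw [Walk.length_cons] at hp
    exact ⟨y, hxy, by omega⟩

lemma IsTree.eq_of_adj_of_dist_add_one_eq_s16 {y₁ y₂ : V} (hT : G.IsTree) (h₁ : G.Adj x y₁)
    (h₂ : G.Adj x y₂) (hd₁ : G.dist y₁ w + 1 = G.dist x w)
    (hd₂ : G.dist y₂ w + 1 = G.dist x w) : y₁ = y₂ := by
  obtain ⟨q₁, hq₁⟩ := hT.connected.exists_walk_length_eq_dist y₁ w
  obtain ⟨q₂, hq₂⟩ := hT.connected.exists_walk_length_eq_dist y₂ w
  have hp₁ := (q₁.cons h₁).isPath_of_length_eq_dist (by rw [Walk.length_cons, hq₁, hd₁])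
  have hp₂ := (q₂.cons h₂).isPath_of_length_eq_dist (by rw [Walk.length_cons, hq₂, hd₂])
  simpa using congrArg Walk.snd ((hT.existsUnique_path x w).unique hp₁ hp₂)

lemma IsTree.dist_eq_add_one_of_adj_of_ne (hT : G.IsTree) (hy : G.Adj x y)
    (hyw : G.dist y w + 1 = G.dist x w) (hz : G.Adj x z) (hzy : z ≠ y) :
    G.dist z w = G.dist x w + 1 := by
  rw [dist_comm, dist_comm (u := x)]
  rcases hT.dist_eq_dist_add_one_of_adj w hz with h | h
  · refine absurd (hT.eq_of_adj_of_dist_add_one_eq_s16 hz hy ?_ hyw) hzy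
    rw [dist_comm (u := z), dist_comm (u := x), h]
  · exact h

lemma IsTree.exists_adj_dist_eq_add_one [Fintype (G.neighborSet x)] (hT : G.IsTree)
    (hxw : x ≠ w) (hx : 1 < G.degree x) : ∃ z, G.Adj x z ∧ G.dist z w = G.dist x w + 1 := by
  obtain ⟨y, hy, hyw⟩ := hT.connected.exists_adj_dist_add_one_eq hxw
  obtain ⟨z, hz, hzy⟩ := Finset.exists_mem_ne hx y
  rw [mem_neighborFinset] at hz
  exact ⟨z, hz, hT.dist_eq_add_one_of_adj_of_ne hy hyw hz hzy⟩

lemma Walk.dist_add_dist_le_length (p : G.Walk x y) (hz : z ∈ p.support) :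
    G.dist x z + G.dist z y ≤ p.length := by
  classical
  rw [← p.take_spec hz, Walk.length_append]
  exact add_le_add (dist_le _) (dist_le _)

section Leaves

variable [Fintype V] [DecidableRel G.Adj]

variable (G) in
/-- The neighbour of a leaf; junk value `u` when `u` is not a leaf. -/
noncomputable def leafParent (u : V) : V :=
  if h : G.degree u = 1 then (degree_eq_one_iff_existsUnique_adj.mp h).exists.choose else u

lemma adj_leafParent (hu : G.degree u = 1) : G.Adj u (G.leafParent u) := by
  rw [leafParent, dif_pos hu]
  exact (degree_eq_one_iff_existsUnique_adj.mp hu).exists.choose_spec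

lemma eq_leafParent_of_adj (hu : G.degree u = 1) (h : G.Adj u x) : x = G.leafParent u :=
  (degree_eq_one_iff_existsUnique_adj.mp hu).unique h (adj_leafParent hu)

lemma Connected.dist_eq_dist_leafParent_add_one (hG : G.Connected) (hu : G.degree u = 1)
    (hx : x ≠ u) : G.dist u x = G.dist (G.leafParent u) x + 1 := by
  obtain ⟨y, hy, hyx⟩ := hG.exists_adj_dist_add_one_eq hx.symm
  rw [← eq_leafParent_of_adj hu hy, hyx]

lemma Connected.dist_add_two_le_of_degree_eq_one (hG : G.Connected) (hz : G.degree z = 1)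
    (hx : x ≠ z) (hy : y ≠ z) : G.dist x y + 2 ≤ G.dist x z + G.dist z y := by
  have h₁ := hG.dist_eq_dist_leafParent_add_one hz hx
  have h₂ := hG.dist_eq_dist_leafParent_add_one hz hy
  have h₃ : G.dist x y ≤ G.dist (G.leafParent z) x + G.dist (G.leafParent z) y := by
    rw [dist_comm (u := G.leafParent z) (v := x)]
    exact hG.dist_triangle
  rw [dist_comm (u := z) (v := x)] at h₁
  omega

lemma Connected.degree_ne_one_of_mem_support (hG : G.Connected) (hx : G.degree x ≠ 1)
    (hy : G.degree y ≠ 1) (p : G.Walk x y) (hp : p.length = G.dist x y) (hz : z ∈ p.support) :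
    G.degree z ≠ 1 := by
  intro hz1
  have h₁ := hG.dist_add_two_le_of_degree_eq_one hz1 (x := x) (y := y)
    (by rintro rfl; exact hx hz1) (by rintro rfl; exact hy hz1)
  have h₂ := p.dist_add_dist_le_length hz
  omega

variable (G) in
def leaves : Finset V := {v | G.degree v = 1}

variable (G) in
def internalVertices : Finset V := {v | G.degree v ≠ 1}

variable (G) in
noncomputable def penultimates [DecidableEq V] : Finset V := G.leaves.image G.leafParent

@[simp] lemma mem_leaves : u ∈ G.leaves ↔ G.degree u = 1 := by simp [leaves]

@[simp] lemma mem_internalVertices : u ∈ G.internalVertices ↔ G.degree u ≠ 1 := by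
  simp [internalVertices]

/-! ## Pruning the leaves -/

variable (G) in
abbrev prune : SimpleGraph {v | G.degree v ≠ 1} := G.induce {v | G.degree v ≠ 1}

lemma Connected.exists_prune_walk_length_eq_dist (hG : G.Connected)
    (x y : {v | G.degree v ≠ 1}) : ∃ q : G.prune.Walk x y, q.length = G.dist x y := by
  obtain ⟨x, hx⟩ := x
  obtain ⟨y, hy⟩ := y
  obtain ⟨p, hp⟩ := hG.exists_walk_length_eq_dist x y
  have hsupp : ∀ z ∈ p.support, z ∈ {v | G.degree v ≠ 1} :=
    fun z hz => hG.degree_ne_one_of_mem_support hx hy p hp hz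
  refine ⟨p.induce _ hsupp, ?_⟩
  have := congrArg Walk.length (p.map_induce hsupp)
  rw [Walk.length_map] at this
  exact this.trans hp

lemma Connected.dist_prune (hG : G.Connected) (x y : {v | G.degree v ≠ 1}) :
    G.prune.dist x y = G.dist x y := by
  obtain ⟨q, hq⟩ := hG.exists_prune_walk_length_eq_dist x y
  obtain ⟨q', hq'⟩ := Reachable.exists_walk_length_eq_dist ⟨q⟩
  have h₁ := dist_le q
  have h₂ : G.dist x y ≤ (q'.map (Embedding.induce _).toHom).length := dist_le _
  rw [Walk.length_map, hq'] at h₂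
  exact le_antisymm (hq ▸ h₁) h₂

lemma IsTree.prune (hT : G.IsTree) (hne : ∃ v, G.degree v ≠ 1) : G.prune.IsTree := by
  obtain ⟨v, hv⟩ := hne
  have : Nonempty {v | G.degree v ≠ 1} := ⟨⟨v, hv⟩⟩
  exact ⟨⟨fun x y => ⟨(hT.connected.exists_prune_walk_length_eq_dist x y).choose⟩⟩,
    hT.isAcyclic.induce _⟩

lemma degree_prune (v : {v | G.degree v ≠ 1}) :
    G.prune.degree v = #{z ∈ G.neighborFinset v | G.degree z ≠ 1} := by
  classical
  rw [← card_neighborFinset_eq_degree, ← card_map (Function.Embedding.subtype _)]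
  congr 1
  ext z
  simp [neighborFinset_def]

lemma map_univ_prune : (univ : Finset {v | G.degree v ≠ 1}).map (Function.Embedding.subtype _) =
    G.internalVertices := by
  ext v
  simp

end Leaves

/-! ## Counting pairs at a given distance -/

variable (G) in
noncomputable def pairCount (A B : Finset V) (t : ℕ) : ℕ :=
  #{q ∈ A ×ˢ B | G.dist q.1 q.2 = t}

lemma pairCount_eq_sum (A B : Finset V) (t : ℕ) :
    G.pairCount A B t = ∑ x ∈ A, #{y ∈ B | G.dist x y = t} := by
  simp only [pairCount, card_filter, sum_product]

lemma pairCount_comm (A B : Finset V) (t : ℕ) : G.pairCount A B t = G.pairCount B A t := by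
  apply card_nbij' Prod.swap Prod.swap <;> intro q <;> simp [dist_comm, and_comm]

lemma Connected.pairCount_self_zero [DecidableEq V] (hG : G.Connected) (A : Finset V) :
    G.pairCount A A 0 = #A := by
  rw [pairCount_eq_sum, card_eq_sum_ones]
  refine sum_congr rfl fun x hx => ?_
  rw [card_eq_one]
  refine ⟨x, ext fun y => ?_⟩
  simp only [mem_filter, hG.dist_eq_zero_iff, mem_singleton]
  exact ⟨fun h => h.2.symm, fun h => ⟨h ▸ hx, h.symm⟩⟩

lemma pairCount_univ_univ_eq_two_mul_pathCount {W : Type} [Fintype W] [DecidableEq W]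
    {G : SimpleGraph W} {t : ℕ} (ht : 0 < t) : G.pairCount univ univ t = 2 * pathCount G t := by
  rw [pairCount, pathCount, card_eq_sum_card_fiberwise (f := fun q : W × W => s(q.1, q.2))
    (t := {p : Sym2 W | ∃ u v, p = s(u, v) ∧ G.dist u v = t}), mul_comm, ← smul_eq_mul,
    ← sum_const]
  · refine sum_congr rfl fun p hp => ?_
    obtain ⟨u, v, rfl, huv⟩ := (mem_filter.mp hp).2
    have hne : u ≠ v := by rintro rfl; rw [dist_self] at huv; omega
    rw [card_eq_two]
    refine ⟨(u, v), (v, u), by simp [hne], ?_⟩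
    ext ⟨a, b⟩
    simp only [mem_filter, mem_product, mem_univ, true_and, Sym2.eq_iff, mem_insert,
      mem_singleton, Prod.mk.injEq]
    constructor
    · rintro ⟨-, h | h⟩ <;> simp [h]
    · rintro (⟨rfl, rfl⟩ | ⟨rfl, rfl⟩)
      · exact ⟨huv, .inl ⟨rfl, rfl⟩⟩
      · exact ⟨dist_comm.trans huv, .inr ⟨rfl, rfl⟩⟩
  · intro q hq
    simp only [coe_filter, mem_product, mem_univ, true_and] at hq
    exact mem_filter.mpr ⟨mem_univ _, q.1, q.2, rfl, hq⟩

section Leaves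

variable [Fintype V] [DecidableRel G.Adj]

lemma pairCount_univ_right (A : Finset V) (t : ℕ) :
    G.pairCount A univ t = G.pairCount A G.internalVertices t + G.pairCount A G.leaves t := by
  simp only [pairCount_eq_sum, ← sum_add_distrib, internalVertices, leaves, filter_filter]
  refine sum_congr rfl fun x _ => ?_
  rw [← card_filter_add_card_filter_not (p := fun y => G.degree y ≠ 1), filter_filter,
    filter_filter]
  simp only [and_comm, not_not]

lemma pairCount_univ_univ (t : ℕ) :
    G.pairCount univ univ t = G.pairCount G.internalVertices G.internalVertices t +
      2 * G.pairCount G.leaves G.internalVertices t + G.pairCount G.leaves G.leaves t := by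
  have hI := pairCount_univ_right (G := G) G.internalVertices t
  have hL := pairCount_univ_right (G := G) G.leaves t
  rw [pairCount_univ_right, pairCount_comm univ, hI, pairCount_comm univ, hL,
    pairCount_comm G.internalVertices G.leaves]
  ring

lemma Connected.pairCount_leaves_internalVertices_zero (hG : G.Connected) :
    G.pairCount G.leaves G.internalVertices 0 = 0 := by
  rw [pairCount, card_eq_zero, filter_eq_empty_iff]
  rintro ⟨u, x⟩ hux hdist
  simp only [mem_product, mem_leaves, mem_internalVertices] at hux
  have hux' : u = x := hG.dist_eq_zero_iff.mp hdist
  exact hux.2 (hux' ▸ hux.1)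

lemma Connected.pairCount_prune (hG : G.Connected) (A B : Finset {v | G.degree v ≠ 1})
    (t : ℕ) : G.prune.pairCount A B t = G.pairCount (A.map (Function.Embedding.subtype _))
      (B.map (Function.Embedding.subtype _)) t := by
  simp only [pairCount_eq_sum, sum_map, filter_map, card_map]
  exact sum_congr rfl fun x _ => congrArg card <| filter_congr fun y _ => by
    simp [hG.dist_prune]

lemma Connected.pairCount_prune_univ (hG : G.Connected) (t : ℕ) :
    G.prune.pairCount univ univ t = G.pairCount G.internalVertices G.internalVertices t := by
  rw [hG.pairCount_prune, map_univ_prune]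

end Leaves

end SimpleGraph

namespace IsPerfectUnrootedMary

/-! ## Structure of perfect trees -/

variable {W : Type} [Fintype W] {G : SimpleGraph W} [DecidableRel G.Adj] {m d : ℕ} {u v x y : W}

lemma isTree (hG : IsPerfectUnrootedMary m d G) : G.IsTree := hG.1

lemma dist_le (hG : IsPerfectUnrootedMary m d G) (x y : W) : G.dist x y ≤ d := hG.2.2.1 x y

lemma degree_eq_of_ne_one (hG : IsPerfectUnrootedMary m d G) (hd : 0 < d)
    (hx : G.degree x ≠ 1) : G.degree x = m + 1 :=
  (hG.2.1 hd x).resolve_left hx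

lemma exists_dist_eq_of_degree_eq_one (hG : IsPerfectUnrootedMary m d G)
    (hu : G.degree u = 1) : ∃ w, G.dist u w = d := by
  obtain ⟨w, hw⟩ := hG.2.2.2.2 u hu
  exact ⟨w, dist_comm.trans hw⟩

lemma degree_eq_one_of_dist_eq (hG : IsPerfectUnrootedMary m d G) (hm : 0 < m) (hd : 0 < d)
    (h : G.dist x y = d) : G.degree x = 1 := by
  by_contra hx
  have hxy : x ≠ y := by rintro rfl; rw [dist_self] at h; omega
  have hdeg := hG.degree_eq_of_ne_one hd hx
  obtain ⟨z, -, hz⟩ := hG.isTree.exists_adj_dist_eq_add_one hxy (by omega)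
  have := hG.dist_le z y
  omega

lemma exists_degree_eq_one (hG : IsPerfectUnrootedMary m d G) (hm : 0 < m) (hd : 0 < d) :
    ∃ u, G.degree u = 1 := by
  obtain ⟨a, b, hab⟩ := hG.2.2.2.1
  exact ⟨a, hG.degree_eq_one_of_dist_eq hm hd hab⟩

lemma exists_dist_eq_diam_of_degree_eq_one (hG : IsPerfectUnrootedMary m d G) (hm : 0 < m)
    (hd : 0 < d) (hu : G.degree u = 1) : ∃ w, G.degree w = 1 ∧ w ≠ u ∧ G.dist u w = d := by
  obtain ⟨w, hw⟩ := hG.exists_dist_eq_of_degree_eq_one hu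
  refine ⟨w, hG.degree_eq_one_of_dist_eq hm hd (dist_comm.trans hw), ?_, hw⟩
  rintro rfl
  rw [dist_self] at hw
  omega

lemma degree_eq_one_of_dist_eq_sub_one (hG : IsPerfectUnrootedMary m d G) (hm : 0 < m)
    (hd : 2 ≤ d) (hx : G.degree x ≠ 1) (h : G.dist x y = d - 1) : G.degree y = 1 := by
  have hxy : x ≠ y := by rintro rfl; rw [dist_self] at h; omega
  have hdeg := hG.degree_eq_of_ne_one (by omega) hx
  obtain ⟨z, -, hz⟩ := hG.isTree.exists_adj_dist_eq_add_one hxy (by omega)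
  exact hG.degree_eq_one_of_dist_eq hm (by omega) (x := y) (y := z) (by rw [dist_comm]; omega)

lemma degree_leafParent_ne_one (hG : IsPerfectUnrootedMary m d G) (hd : 2 ≤ d)
    (hu : G.degree u = 1) : G.degree (G.leafParent u) ≠ 1 := by
  intro hp
  obtain ⟨w, hw⟩ := hG.exists_dist_eq_of_degree_eq_one hu
  have hwu : w ≠ u := by rintro rfl; rw [dist_self] at hw; omega
  have h₁ := hG.isTree.connected.dist_eq_dist_leafParent_add_one hu hwu
  have hwp : w ≠ G.leafParent u := by
    rintro rfl
    rw [dist_eq_one_iff_adj.mpr (adj_leafParent hu)] at hw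
    omega
  have h₂ := hG.isTree.connected.dist_eq_dist_leafParent_add_one hp hwp
  rw [← eq_leafParent_of_adj hp (adj_leafParent hu).symm] at h₂
  omega

lemma dist_eq_dist_leafParent_add_two (hG : IsPerfectUnrootedMary m d G) (hd : 2 ≤ d)
    (hu : G.degree u = 1) (hv : G.degree v = 1) (huv : u ≠ v) :
    G.dist u v = G.dist (G.leafParent u) (G.leafParent v) + 2 := by
  have hpv : G.leafParent u ≠ v := fun h => hG.degree_leafParent_ne_one hd hu (h ▸ hv)
  have h₁ := hG.isTree.connected.dist_eq_dist_leafParent_add_one hu huv.symm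
  have h₂ := hG.isTree.connected.dist_eq_dist_leafParent_add_one hv hpv
  rw [dist_comm (u := v), dist_comm (u := G.leafParent v)] at h₂
  omega

lemma exists_internal_adj_leafParent (hG : IsPerfectUnrootedMary m d G) (hm : 0 < m)
    (hd : 3 ≤ d) (hu : G.degree u = 1) :
    ∃ g, G.Adj (G.leafParent u) g ∧ G.degree g ≠ 1 ∧
      ∀ z, G.Adj (G.leafParent u) z → z ≠ g → G.degree z = 1 := by
  obtain ⟨w, hw⟩ := hG.exists_dist_eq_of_degree_eq_one hu
  have hwu : w ≠ u := by rintro rfl; rw [dist_self] at hw; omega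
  have hpw := hG.isTree.connected.dist_eq_dist_leafParent_add_one hu hwu
  have hpw' : G.leafParent u ≠ w := by rintro rfl; rw [dist_self] at hpw; omega
  -- `g` is the first step from the parent towards a leaf `w` at distance `d` from `u`
  obtain ⟨g, hg, hgw⟩ := hG.isTree.connected.exists_adj_dist_add_one_eq hpw'
  refine ⟨g, hg, fun hg1 => ?_, fun z hz hzg => ?_⟩
  · have hwg : w ≠ g := by rintro rfl; rw [dist_self] at hgw; omega
    have := hG.isTree.connected.dist_eq_dist_leafParent_add_one hg1 hwg
    rw [← eq_leafParent_of_adj hg1 hg.symm] at this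
    omega
  · have := hG.isTree.dist_eq_add_one_of_adj_of_ne hg hgw hz hzg
    exact hG.degree_eq_one_of_dist_eq hm (by omega) (y := w) (by omega)

lemma exists_center (hG : IsPerfectUnrootedMary m 2 G) (hm : 0 < m) :
    ∃ c, G.internalVertices = {c} ∧ #G.leaves = m + 1 ∧
      ∀ u ∈ G.leaves, G.leafParent u = c := by
  obtain ⟨a, ha⟩ := hG.exists_degree_eq_one hm two_pos
  have hc := hG.degree_leafParent_ne_one le_rfl ha
  set c := G.leafParent a
  have hc1 : ∀ w, G.dist c w ≤ 1 := fun w => by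
    have h₁ := hG.dist_le c w
    have h₂ : G.dist c w ≠ 2 := fun h => hc (hG.degree_eq_one_of_dist_eq hm two_pos h)
    omega
  have hleaf : ∀ w, w ≠ c → G.degree w = 1 := by
    intro w hw
    by_contra hw1
    have hdeg := hG.degree_eq_of_ne_one two_pos hw1
    obtain ⟨z, -, hz⟩ := hG.isTree.exists_adj_dist_eq_add_one hw (by omega)
    have h₁ := hG.isTree.connected.pos_dist_of_ne hw
    have h₂ := hc1 z
    have h₃ := SimpleGraph.dist_comm (G := G) (u := c) (v := z)
    omega
  have hpar : ∀ u ∈ G.leaves, G.leafParent u = c := by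
    intro u hu
    have huc : u ≠ c := fun h => hc (h ▸ mem_leaves.mp hu)
    have h₁ := hG.isTree.connected.pos_dist_of_ne huc
    have h₂ := hc1 u
    have h₃ := SimpleGraph.dist_comm (G := G) (u := c) (v := u)
    exact (eq_leafParent_of_adj (mem_leaves.mp hu) (dist_eq_one_iff_adj.mp (by omega))).symm
  have hnbr : G.neighborFinset c = G.leaves := by
    ext w
    rw [mem_neighborFinset]
    refine ⟨fun h => mem_leaves.mpr (hleaf w h.ne'), fun hw => ?_⟩
    exact hpar w hw ▸ (adj_leafParent (mem_leaves.mp hw)).symm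
  refine ⟨c, ext fun w => ?_, ?_, hpar⟩
  · simp only [mem_internalVertices, mem_singleton]
    exact ⟨fun hw => by_contra fun hwc => hw (hleaf w hwc), fun hwc => hwc ▸ hc⟩
  · rw [← hnbr, card_neighborFinset_eq_degree, hG.degree_eq_of_ne_one two_pos hc]

variable [DecidableEq W]

lemma card_filter_leafParent_eq (hG : IsPerfectUnrootedMary m d G) (hm : 0 < m) (hd : 3 ≤ d)
    (hu : G.degree u = 1) : #{v ∈ G.leaves | G.leafParent v = G.leafParent u} = m := by
  obtain ⟨g, hg, hg1, hleaf⟩ := hG.exists_internal_adj_leafParent hm hd hu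
  have hdeg := hG.degree_eq_of_ne_one (by omega) (hG.degree_leafParent_ne_one (by omega) hu)
  have : {v ∈ G.leaves | G.leafParent v = G.leafParent u} =
      (G.neighborFinset (G.leafParent u)).erase g := by
    ext v
    simp only [mem_filter, mem_leaves, mem_erase, mem_neighborFinset]
    constructor
    · rintro ⟨hv, hvu⟩
      exact ⟨by rintro rfl; exact hg1 hv, hvu ▸ (adj_leafParent hv).symm⟩
    · rintro ⟨hvg, hv⟩
      have hv1 := hleaf v hv hvg
      exact ⟨hv1, (eq_leafParent_of_adj hv1 hv.symm).symm⟩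
  rw [this, card_erase_of_mem ((mem_neighborFinset _ _ _).mpr hg),
    card_neighborFinset_eq_degree, hdeg, Nat.add_sub_cancel]

lemma sum_leaves_comp_leafParent (hG : IsPerfectUnrootedMary m d G) (hm : 0 < m) (hd : 3 ≤ d)
    (F : W → ℕ) :
    ∑ u ∈ G.leaves, F (G.leafParent u) = m * ∑ p ∈ G.penultimates, F p := by
  rw [sum_comp, mul_sum]
  refine sum_congr rfl fun p hp => ?_
  obtain ⟨u, hu, rfl⟩ := mem_image.mp hp
  rw [hG.card_filter_leafParent_eq hm hd (mem_leaves.mp hu), smul_eq_mul]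

lemma card_leaves (hG : IsPerfectUnrootedMary m d G) (hm : 0 < m) (hd : 3 ≤ d) :
    #G.leaves = m * #G.penultimates := by
  simpa using hG.sum_leaves_comp_leafParent hm hd (fun _ => 1)

lemma degree_prune_eq (hG : IsPerfectUnrootedMary m d G) (hm : 0 < m) (hd : 3 ≤ d)
    (v : {v | G.degree v ≠ 1}) :
    G.prune.degree v = if (v : W) ∈ G.penultimates then 1 else m + 1 := by
  rw [degree_prune]
  split_ifs with hv
  · obtain ⟨u, hu, huv⟩ := mem_image.mp hv
    obtain ⟨g, hg, hg1, hleaf⟩ := hG.exists_internal_adj_leafParent hm hd (mem_leaves.mp hu)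
    rw [card_eq_one]
    refine ⟨g, ext fun z => ?_⟩
    simp only [mem_filter, mem_neighborFinset, mem_singleton, ← huv]
    exact ⟨fun ⟨hz, hz1⟩ => by_contra fun hzg => hz1 (hleaf z hz hzg),
      fun h => h ▸ ⟨hg, hg1⟩⟩
  · rw [filter_true_of_mem, card_neighborFinset_eq_degree, hG.degree_eq_of_ne_one (by omega) v.2]
    intro z hz hz1
    rw [mem_neighborFinset] at hz
    exact hv (mem_image.mpr ⟨z, mem_leaves.mpr hz1, (eq_leafParent_of_adj hz1 hz.symm).symm⟩)

lemma map_leaves_prune (hG : IsPerfectUnrootedMary m d G) (hm : 0 < m) (hd : 3 ≤ d) :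
    G.prune.leaves.map (Function.Embedding.subtype _) = G.penultimates := by
  ext v
  simp only [mem_map, mem_leaves, Function.Embedding.subtype_apply]
  constructor
  · rintro ⟨v, hv, rfl⟩
    rw [hG.degree_prune_eq hm hd] at hv
    split_ifs at hv with h
    · exact h
    · omega
  · intro hv
    obtain ⟨u, hu, rfl⟩ := mem_image.mp hv
    refine ⟨⟨_, hG.degree_leafParent_ne_one (by omega) (mem_leaves.mp hu)⟩, ?_, rfl⟩
    rw [hG.degree_prune_eq hm hd, if_pos hv]

lemma prune (hG : IsPerfectUnrootedMary m d G) (hm : 0 < m) (hd : 3 ≤ d) :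
    IsPerfectUnrootedMary m (d - 2) G.prune := by
  have hconn := hG.isTree.connected
  obtain ⟨a, ha⟩ := hG.exists_degree_eq_one hm (by omega)
  obtain ⟨b, hb, hba, hab⟩ := hG.exists_dist_eq_diam_of_degree_eq_one hm (by omega) ha
  refine ⟨hG.isTree.prune ⟨_, hG.degree_leafParent_ne_one (by omega) ha⟩, fun _ v => ?_,
    fun x y => ?_, ?_, fun v hv => ?_⟩
  · rw [hG.degree_prune_eq hm hd]
    split_ifs <;> simp
  · rw [hconn.dist_prune]
    have h₁ : G.dist x y ≠ d := fun h => x.2 (hG.degree_eq_one_of_dist_eq hm (by omega) h)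
    have h₂ : G.dist x y ≠ d - 1 :=
      fun h => y.2 (hG.degree_eq_one_of_dist_eq_sub_one hm (by omega) x.2 h)
    have := hG.dist_le x y
    omega
  · refine ⟨⟨_, hG.degree_leafParent_ne_one (by omega) ha⟩,
      ⟨_, hG.degree_leafParent_ne_one (by omega) hb⟩, ?_⟩
    rw [hconn.dist_prune]
    have := hG.dist_eq_dist_leafParent_add_two (by omega) ha hb hba.symm
    simp only
    omega
  · have hv' : (v : W) ∈ G.penultimates := by
      rw [← hG.map_leaves_prune hm hd]
      exact mem_map_of_mem _ (mem_leaves.mpr hv)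
    obtain ⟨u, hu, huv⟩ := mem_image.mp hv'
    obtain ⟨w, hw, hwu, huw⟩ :=
      hG.exists_dist_eq_diam_of_degree_eq_one hm (by omega) (mem_leaves.mp hu)
    refine ⟨⟨_, hG.degree_leafParent_ne_one (by omega) hw⟩, ?_⟩
    rw [hconn.dist_prune]
    have := hG.dist_eq_dist_leafParent_add_two (by omega) (mem_leaves.mp hu) hw hwu.symm
    simp only [← huv, dist_comm (u := G.leafParent w)]
    omega

end IsPerfectUnrootedMary

namespace IsPerfectUnrootedMary

variable {W : Type} [Fintype W] {G : SimpleGraph W} [DecidableRel G.Adj] {m d : ℕ}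

/-! ## Recurrences for the pair counts -/

lemma pairCount_leaves_internalVertices_of_diam_two (hG : IsPerfectUnrootedMary m 2 G)
    (hm : 0 < m) (t : ℕ) :
    G.pairCount G.leaves G.internalVertices t = if t = 1 then m + 1 else 0 := by
  obtain ⟨c, hI, hcard, hpar⟩ := hG.exists_center hm
  have hdist : ∀ u ∈ G.leaves,
      #{x ∈ G.internalVertices | G.dist u x = t} = if t = 1 then 1 else 0 := by
    intro u hu
    rw [hI, filter_singleton, ← hpar u hu,
      dist_eq_one_iff_adj.mpr (adj_leafParent (mem_leaves.mp hu))]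
    split_ifs <;> simp only [card_singleton, card_empty] <;> omega
  rw [pairCount_eq_sum, sum_congr rfl hdist, sum_const, hcard, smul_eq_mul]
  split_ifs <;> simp

lemma pairCount_leaves_leaves_of_diam_two [DecidableEq W] (hG : IsPerfectUnrootedMary m 2 G)
    (hm : 0 < m) (t : ℕ) : G.pairCount G.leaves G.leaves t =
      if t = 0 then m + 1 else if t = 2 then (m + 1) * m else 0 := by
  obtain ⟨c, -, hcard, hpar⟩ := hG.exists_center hm
  have hdist : ∀ u ∈ G.leaves, ∀ x ∈ G.leaves, G.dist u x = if u = x then 0 else 2 := by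
    intro u hu x hx
    split_ifs with hux
    · rw [hux, dist_self]
    · rw [hG.dist_eq_dist_leafParent_add_two le_rfl (mem_leaves.mp hu) (mem_leaves.mp hx) hux,
        hpar u hu, hpar x hx, dist_self]
  have hcount : ∀ u ∈ G.leaves, #{x ∈ G.leaves | G.dist u x = t} =
      if t = 0 then 1 else if t = 2 then m else 0 := by
    intro u hu
    split_ifs with h₀ h₂
    · rw [filter_congr (q := (u = ·)) fun x hx => by
        rw [hdist u hu x hx, h₀]; split_ifs with h <;> simp [h]]
      rw [filter_eq, if_pos hu, card_singleton]
    · rw [filter_congr (q := (u ≠ ·)) fun x hx => by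
        rw [hdist u hu x hx, h₂]; split_ifs with h <;> simp [h]]
      rw [filter_ne, card_erase_of_mem hu, hcard, Nat.add_sub_cancel]
    · rw [card_eq_zero, filter_eq_empty_iff]
      intro x hx
      rw [hdist u hu x hx]
      split_ifs <;> omega
  rw [pairCount_eq_sum, sum_congr rfl hcount, sum_const, hcard, smul_eq_mul]
  split_ifs <;> ring

lemma pairCount_leaves_leaves_one (hG : IsPerfectUnrootedMary m d G) (hd : 2 ≤ d) :
    G.pairCount G.leaves G.leaves 1 = 0 := by
  rw [pairCount, card_eq_zero, filter_eq_empty_iff]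
  rintro ⟨u, x⟩ hux hdist
  simp only [mem_product, mem_leaves] at hux
  rw [dist_eq_one_iff_adj] at hdist
  exact hG.degree_leafParent_ne_one hd hux.1 (eq_leafParent_of_adj hux.1 hdist ▸ hux.2)

variable [DecidableEq W]

lemma pairCount_prune_leaves (hG : IsPerfectUnrootedMary m d G) (hm : 0 < m) (hd : 3 ≤ d)
    (B : Finset {v | G.degree v ≠ 1}) (t : ℕ) :
    G.prune.pairCount G.prune.leaves B t =
      G.pairCount G.penultimates (B.map (Function.Embedding.subtype _)) t := by
  rw [hG.isTree.connected.pairCount_prune, hG.map_leaves_prune hm hd]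

lemma card_penultimates (hG : IsPerfectUnrootedMary m d G) (hm : 0 < m) (hd : 3 ≤ d) :
    #G.penultimates = G.prune.pairCount G.prune.leaves G.prune.leaves 0 := by
  rw [(hG.prune hm hd).isTree.connected.pairCount_self_zero,
    ← card_map (Function.Embedding.subtype _), hG.map_leaves_prune hm hd]

lemma pairCount_leaves_internalVertices_succ (hG : IsPerfectUnrootedMary m d G) (hm : 0 < m)
    (hd : 3 ≤ d) (t : ℕ) :
    G.pairCount G.leaves G.internalVertices (t + 1) =
      m * G.prune.pairCount G.prune.leaves univ t := by
  have hparent : ∀ u ∈ G.leaves, #{x ∈ G.internalVertices | G.dist u x = t + 1} =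
      #{x ∈ G.internalVertices | G.dist (G.leafParent u) x = t} := by
    intro u hu
    refine congrArg card (filter_congr fun x hx => ?_)
    have hxu : x ≠ u := by rintro rfl; exact mem_internalVertices.mp hx (mem_leaves.mp hu)
    rw [hG.isTree.connected.dist_eq_dist_leafParent_add_one (mem_leaves.mp hu) hxu]
    omega
  rw [pairCount_eq_sum, sum_congr rfl hparent, hG.sum_leaves_comp_leafParent hm hd
    (fun p => #{x ∈ G.internalVertices | G.dist p x = t}), hG.pairCount_prune_leaves hm hd,
    map_univ_prune, pairCount_eq_sum]

lemma pairCount_leaves_leaves_zero (hG : IsPerfectUnrootedMary m d G) (hm : 0 < m)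
    (hd : 3 ≤ d) :
    G.pairCount G.leaves G.leaves 0 = m * G.prune.pairCount G.prune.leaves G.prune.leaves 0 := by
  rw [hG.isTree.connected.pairCount_self_zero, hG.card_leaves hm hd, hG.card_penultimates hm hd]

lemma pairCount_leaves_leaves_two (hG : IsPerfectUnrootedMary m d G) (hm : 0 < m) (hd : 3 ≤ d) :
    G.pairCount G.leaves G.leaves 2 =
      m * (m - 1) * G.prune.pairCount G.prune.leaves G.prune.leaves 0 := by
  have hsiblings : ∀ u ∈ G.leaves, #{x ∈ G.leaves | G.dist u x = 2} = m - 1 := by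
    intro u hu
    rw [← hG.card_filter_leafParent_eq hm hd (mem_leaves.mp hu),
      ← card_erase_of_mem (s := {v ∈ G.leaves | G.leafParent v = G.leafParent u}) (a := u)
        (mem_filter.mpr ⟨hu, rfl⟩)]
    congr 1
    ext x
    simp only [mem_filter, mem_erase]
    constructor
    · rintro ⟨hx, hux⟩
      have hxu : x ≠ u := by rintro rfl; rw [dist_self] at hux; omega
      rw [hG.dist_eq_dist_leafParent_add_two (by omega) (mem_leaves.mp hu) (mem_leaves.mp hx)
        hxu.symm, Nat.add_eq_right, hG.isTree.connected.dist_eq_zero_iff] at hux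
      exact ⟨hxu, hx, hux.symm⟩
    · rintro ⟨hxu, hx, hpar⟩
      rw [hG.dist_eq_dist_leafParent_add_two (by omega) (mem_leaves.mp hu) (mem_leaves.mp hx)
        hxu.symm, hpar, dist_self]
      exact ⟨hx, rfl⟩
  rw [pairCount_eq_sum, sum_congr rfl hsiblings, sum_const, smul_eq_mul, hG.card_leaves hm hd,
    hG.card_penultimates hm hd]
  ring

lemma pairCount_leaves_leaves_add_three (hG : IsPerfectUnrootedMary m d G) (hm : 0 < m)
    (hd : 3 ≤ d) (t : ℕ) :
    G.pairCount G.leaves G.leaves (t + 3) =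
      m ^ 2 * G.prune.pairCount G.prune.leaves G.prune.leaves (t + 1) := by
  have hparents : ∀ u ∈ G.leaves, #{x ∈ G.leaves | G.dist u x = t + 3} =
      m * #{q ∈ G.penultimates | G.dist (G.leafParent u) q = t + 1} := by
    intro u hu
    rw [card_filter, card_filter, ← hG.sum_leaves_comp_leafParent hm hd]
    refine sum_congr rfl fun x hx => ?_
    by_cases hux : u = x
    · simp [hux]
    · rw [hG.dist_eq_dist_leafParent_add_two (by omega) (mem_leaves.mp hu) (mem_leaves.mp hx) hux]
      simp
  rw [pairCount_eq_sum, sum_congr rfl hparents, ← mul_sum, hG.sum_leaves_comp_leafParent hm hd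
    (fun p => #{q ∈ G.penultimates | G.dist p q = t + 1}), hG.pairCount_prune_leaves hm hd,
    hG.map_leaves_prune hm hd, pairCount_eq_sum]
  ring

end IsPerfectUnrootedMary

/-! ## Solving the recurrences -/

/- Closed forms for the perfect tree of diameter `2 * n + 2`, which has `(m + 1) * m ^ n` leaves.
From a leaf, there are `m ^ ((t - 1) / 2)` internal vertices at distance `t ≤ 2 * n + 1`, and
`(m - 1) * m ^ (j - 1)` other leaves at distance `2 * j < 2 * n + 2` (`m ^ (n + 1)` at distance
`2 * n + 2`). `oddDistFormula m n k` is the number of ordered pairs at distance `2 * k + 1`. -/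

def leafInternalFormula (m n t : ℕ) : ℕ :=
  if 1 ≤ t ∧ t ≤ 2 * n + 1 then (m + 1) * m ^ (n + (t - 1) / 2) else 0

def leafLeafFormula (m n t : ℕ) : ℕ :=
  if t = 0 then (m + 1) * m ^ n
  else if t % 2 = 1 ∨ 2 * n + 2 < t then 0
  else if t = 2 * n + 2 then (m + 1) * m ^ (2 * n + 1)
  else (m + 1) * (m - 1) * m ^ (n + t / 2 - 1)

def oddDistFormula (m n k : ℕ) : ℕ := 2 * (m + 1) * ∑ i ∈ range (n + 1 - k), m ^ (2 * k + i)

section Formulas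

variable {m : ℕ}

lemma leafInternalFormula_succ_succ (hm : 0 < m) (n t : ℕ) :
    leafInternalFormula m (n + 1) (t + 1) =
      m * (leafInternalFormula m n t + leafLeafFormula m n t) := by
  obtain ⟨M, rfl⟩ : ∃ M, m = M + 1 := ⟨m - 1, by omega⟩
  unfold leafInternalFormula leafLeafFormula
  rcases Nat.eq_zero_or_pos t with rfl | ht
  · simp only [Nat.add_sub_cancel, Nat.zero_div]
    split_ifs <;> first | omega | ring
  obtain ⟨j, rfl | rfl⟩ : ∃ j, t = 2 * j + 1 ∨ t = 2 * j + 2 := ⟨(t - 1) / 2, by omega⟩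
  · simp only [show (2 * j + 1 + 1 - 1) / 2 = j by omega, show (2 * j + 1 - 1) / 2 = j by omega]
    split_ifs <;> first | omega | contradiction | ring
  · simp only [Nat.add_sub_cancel, show (2 * j + 2) / 2 = j + 1 by omega,
      show (2 * j + 2 - 1) / 2 = j by omega, show n + (j + 1) - 1 = n + j by omega]
    rcases lt_trichotomy j n with h | rfl | h
    · rw [if_pos (by omega), if_pos (by omega), if_neg (by omega), if_neg (by omega),
        if_neg (by omega)]
      ring
    · rw [if_pos (by omega), if_neg (by omega), if_neg (by omega), if_neg (by omega), if_pos rfl]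
      ring
    · rw [if_neg (by omega), if_neg (by omega), if_neg (by omega), if_pos (by omega)]
      rfl

lemma leafLeafFormula_succ_zero (n : ℕ) :
    leafLeafFormula m (n + 1) 0 = m * leafLeafFormula m n 0 := by
  rw [leafLeafFormula, leafLeafFormula, if_pos rfl, if_pos rfl]
  ring

lemma leafLeafFormula_succ_one (n : ℕ) : leafLeafFormula m (n + 1) 1 = 0 := by
  simp [leafLeafFormula]

lemma leafLeafFormula_succ_two (n : ℕ) :
    leafLeafFormula m (n + 1) 2 = m * (m - 1) * leafLeafFormula m n 0 := by
  rw [leafLeafFormula, leafLeafFormula, if_neg (by omega), if_neg (by omega), if_neg (by omega),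
    if_pos rfl, show n + 1 + 2 / 2 - 1 = n + 1 by omega]
  ring

lemma leafLeafFormula_succ_add_three (n t : ℕ) :
    leafLeafFormula m (n + 1) (t + 3) = m ^ 2 * leafLeafFormula m n (t + 1) := by
  unfold leafLeafFormula
  rcases Nat.even_or_odd' t with ⟨j, rfl | rfl⟩
  · rw [if_neg (by omega), if_pos (by omega), if_neg (by omega), if_pos (by omega), mul_zero]
  · rw [show 2 * j + 1 + 3 = 2 * (j + 2) by ring, show 2 * j + 1 + 1 = 2 * (j + 1) by ring]
    simp only [Nat.mul_div_cancel_left _ two_pos, show n + 1 + (j + 2) - 1 = n + j + 2 by omega,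
      show n + (j + 1) - 1 = n + j by omega]
    split_ifs <;> first | omega | contradiction | ring

lemma leafLeafFormula_odd (n k : ℕ) : leafLeafFormula m n (2 * k + 1) = 0 := by
  rw [leafLeafFormula, if_neg (by omega), if_pos (by omega)]

lemma oddDistFormula_succ (n k : ℕ) : oddDistFormula m (n + 1) k =
    oddDistFormula m n k + 2 * leafInternalFormula m (n + 1) (2 * k + 1) := by
  unfold oddDistFormula leafInternalFormula
  by_cases hk : k ≤ n + 1
  · rw [if_pos (by omega), show n + 1 + 1 - k = n + 1 - k + 1 by omega, sum_range_succ,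
      show (2 * k + 1 - 1) / 2 = k by omega, show 2 * k + (n + 1 - k) = n + 1 + k by omega]
    ring
  · rw [if_neg (by omega), show n + 1 + 1 - k = 0 by omega, show n + 1 - k = 0 by omega]
    simp

lemma oddDistFormula_eq (hm : 2 ≤ m) (n k : ℕ) :
    (oddDistFormula m n k : ℚ) = 2 * ((m : ℚ) ^ (2 * k) / ((m : ℚ) - 1) *
      (((m : ℚ) + 1) * (m : ℚ) ^ (n + 1 - k) - ((m : ℚ) + 1))) := by
  have hm1 : (m : ℚ) - 1 ≠ 0 := by
    have : (2 : ℚ) ≤ m := by exact_mod_cast hm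
    linarith
  rw [oddDistFormula]
  push_cast
  simp_rw [pow_add, ← mul_sum, geom_sum_eq (sub_ne_zero.mp hm1)]
  field_simp

end Formulas

theorem pairCounts_eq_formulas {m : ℕ} (hm : 0 < m) (n : ℕ) {W : Type} [Fintype W]
    [DecidableEq W] (G : SimpleGraph W) [DecidableRel G.Adj]
    (hG : IsPerfectUnrootedMary m (2 * n + 2) G) :
    (∀ t, G.pairCount G.leaves G.internalVertices t = leafInternalFormula m n t) ∧
    (∀ t, G.pairCount G.leaves G.leaves t = leafLeafFormula m n t) ∧
    (∀ k, G.pairCount univ univ (2 * k + 1) = oddDistFormula m n k) := by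
  induction n generalizing W with
  | zero =>
    rw [mul_zero, zero_add] at hG
    obtain ⟨c, hI, -, -⟩ := hG.exists_center hm
    have hB := hG.pairCount_leaves_internalVertices_of_diam_two hm
    have hL := hG.pairCount_leaves_leaves_of_diam_two hm
    refine ⟨fun t => ?_, fun t => ?_, fun k => ?_⟩
    · rw [hB, leafInternalFormula]
      split_ifs <;> first | omega | simp_all
    · rw [hL, leafLeafFormula]
      split_ifs <;> first | omega | simp_all
    · rw [pairCount_univ_univ, hB, hL, hI, oddDistFormula]
      rcases k with _ | k <;> simp [pairCount]
  | succ n ih =>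
    have hd : 3 ≤ 2 * (n + 1) + 2 := by omega
    have hG' := hG.prune hm hd
    rw [show 2 * (n + 1) + 2 - 2 = 2 * n + 2 by omega] at hG'
    obtain ⟨hB', hL', hD'⟩ := ih G.prune hG'
    have hL : ∀ t, G.pairCount G.leaves G.leaves t = leafLeafFormula m (n + 1) t := by
      rintro (_ | _ | _ | t)
      · rw [hG.pairCount_leaves_leaves_zero hm hd, hL', leafLeafFormula_succ_zero]
      · rw [hG.pairCount_leaves_leaves_one (by omega), leafLeafFormula_succ_one]
      · rw [hG.pairCount_leaves_leaves_two hm hd, hL', leafLeafFormula_succ_two]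
      · rw [hG.pairCount_leaves_leaves_add_three hm hd, hL', leafLeafFormula_succ_add_three]
    have hB : ∀ t, G.pairCount G.leaves G.internalVertices t =
        leafInternalFormula m (n + 1) t := by
      rintro (_ | t)
      · rw [hG.isTree.connected.pairCount_leaves_internalVertices_zero, leafInternalFormula,
          if_neg (by omega)]
      · rw [hG.pairCount_leaves_internalVertices_succ hm hd, pairCount_univ_right, hB', hL',
          leafInternalFormula_succ_succ hm]
    refine ⟨hB, hL, fun k => ?_⟩
    rw [pairCount_univ_univ, ← hG.isTree.connected.pairCount_prune_univ, hD', hB, hL,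
      leafLeafFormula_odd, oddDistFormula_succ, add_zero]

theorem unrooted_evenD_odd_paths (m k r : ℕ) (hm : 2 ≤ m)
    (hk : 1 ≤ k) (hkr : k ≤ r)
    {W : Type} [Fintype W] [DecidableEq W] (G : SimpleGraph W) [DecidableRel G.Adj]
    (hG : IsPerfectUnrootedMary m (2 * r) G) :
    (pathCount G (2 * k - 1) : ℚ) =
      (m : ℚ) ^ (2 * k - 2) / ((m : ℚ) - 1) *
        (((m : ℚ) + 1) * (m : ℚ) ^ (r - k + 1) - ((m : ℚ) + 1)) := by
  obtain ⟨j, rfl⟩ : ∃ j, k = j + 1 := ⟨k - 1, by omega⟩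
  obtain ⟨n, rfl⟩ : ∃ n, r = n + 1 := ⟨r - 1, by omega⟩
  rw [show 2 * (n + 1) = 2 * n + 2 by ring] at hG
  have hcount := (pairCounts_eq_formulas (by omega) n G hG).2.2 j
  rw [pairCount_univ_univ_eq_two_mul_pathCount (by omega), ← Nat.cast_inj (R := ℚ),
    oddDistFormula_eq hm] at hcount
  rw [show 2 * (j + 1) - 1 = 2 * j + 1 by omega, show 2 * (j + 1) - 2 = 2 * j by omega,
    show n + 1 - (j + 1) + 1 = n + 1 - j by omega]
  push_cast at hcount
  linarith
end
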